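/- arXiv:2401.10584 — 7 statements merged into one kernel-verified Lean document; each statement's English description precedes it below -/
import Mathlib

section
/- Let G be a bipartite graph with bipartition (A, B) and let the set of guards be D = B. Then D is an eternal dominating set of G if and only if G admits a matching saturating A (i.e., a matching in which every vertex of A is matched). -/
/-!
If `M` is a matching saturating `A`, Defender keeps the invariant that every edge of `M` has
exactly one guarded end and every vertex outside `M` is guarded: an attacked vertex is then
matched, and its partner's guard slides along the matching edge, which restores the invariant.
Conversely, if no such matching exists, Hall's theorem yields `S ⊆ A` with `|N(S)| < |S|`.
Attacking unguarded vertices of `S` forces each answer to move a guard from `N(S)` into `S`,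
so the number of guards in `S ∪ N(S)` never changes and stays below `|S|`; once `N(S)` is
empty of guards, the next attack on `S` wins.
-/

/-- `AttackerWinsIn G t D` : in the mobile domination game on `G` with guard set `D`,
Attacker has a strategy winning within `t` turns.  At each turn Attacker attacks an
unguarded vertex `v`; Defender must move a guard from some `u ∈ D ∩ N(v)` to `v`,
replacing the guard set by `(D ∪ {v}) \ {u}`; if `D ∩ N(v) = ∅` Attacker wins. -/
def AttackerWinsIn {V : Type*} [DecidableEq V] (G : SimpleGraph V) :
    ℕ → Finset V → Prop
  | 0, _ => False
  | (t + 1), D => ∃ v, v ∉ D ∧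
      ∀ u ∈ D, G.Adj u v → AttackerWinsIn G t (insert v (D.erase u))

/-- `t_G(D)` : the minimum number of turns in which Attacker can force a win,
`⊤` (i.e. `+∞`) if Defender can resist forever.  `D` is an eternal dominating set
exactly when `gameValue G D = ⊤`. -/
noncomputable def gameValue {V : Type*} [DecidableEq V] (G : SimpleGraph V)
    (D : Finset V) : ℕ∞ :=
  sInf {n : ℕ∞ | ∃ t : ℕ, n = (t : ℕ∞) ∧ AttackerWinsIn G t D}

section

open Finset

variable {V : Type*} [DecidableEq V] {G : SimpleGraph V}

theorem gameValue_eq_top_iff (D : Finset V) :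
    gameValue G D = ⊤ ↔ ∀ t, ¬ AttackerWinsIn G t D := by
  simp only [gameValue, sInf_eq_top, Set.mem_ofPred_eq, forall_exists_index, and_imp]
  exact ⟨fun h t ht => ENat.natCast_ne_top t (h _ t rfl ht), fun h _ t _ ht => (h t ht).elim⟩

section Attack

variable {S N : Finset V} {a u : V} {D : Finset V}

theorem card_insert_erase_inter_left (hSN : Disjoint S N) (haS : a ∈ S) (haD : a ∉ D)
    (huN : u ∈ N) : #(insert a (D.erase u) ∩ S) = #(D ∩ S) + 1 := by
  have huS : u ∉ S := disjoint_right.1 hSN huN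
  rw [insert_inter_of_mem haS, erase_inter, erase_eq_of_notMem (by simp [huS]),
    card_insert_of_notMem (by simp [haD])]

theorem card_insert_erase_inter_right (hSN : Disjoint S N) (haS : a ∈ S) (hu : u ∈ D ∩ N) :
    #(insert a (D.erase u) ∩ N) + 1 = #(D ∩ N) := by
  rw [insert_inter_of_notMem (disjoint_left.1 hSN haS), erase_inter, card_erase_add_one hu]

theorem attackerWinsIn_of_card_lt (hN : ∀ a ∈ S, ∀ u, G.Adj u a → u ∈ N)
    (hSN : Disjoint S N) (D : Finset V) (hD : #(D ∩ S) + #(D ∩ N) < #S) :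
    AttackerWinsIn G (#(D ∩ N) + 1) D := by
  obtain ⟨a, haS, haD⟩ : ∃ a ∈ S, a ∉ D := by
    obtain ⟨a, haS, ha⟩ := exists_mem_notMem_of_card_lt_card (s := D ∩ S) (t := S) (by omega)
    exact ⟨a, haS, fun haD => ha (mem_inter.2 ⟨haD, haS⟩)⟩
  refine ⟨a, haD, fun u huD hua => ?_⟩
  have hu : u ∈ D ∩ N := mem_inter.2 ⟨huD, hN a haS u hua⟩
  have hleft := card_insert_erase_inter_left hSN haS haD (mem_inter.1 hu).2
  have hright := card_insert_erase_inter_right hSN haS hu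
  rw [← hright]
  exact attackerWinsIn_of_card_lt hN hSN _ (by omega)
termination_by #(D ∩ N)
decreasing_by omega

end Attack

namespace SimpleGraph.Subgraph

def IsGuardedBy (M : G.Subgraph) (D : Finset V) : Prop :=
  (∀ u w, M.Adj u w → (u ∈ D ↔ w ∉ D)) ∧ ∀ v ∉ M.verts, v ∈ D

variable {M : G.Subgraph} {D : Finset V} {v w : V}

theorem IsGuardedBy.insert_erase (hM : M.IsMatching) (hD : M.IsGuardedBy D)
    (hvw : M.Adj v w) : M.IsGuardedBy (insert v (D.erase w)) := by
  refine ⟨fun x y hxy => ?_, fun x hx => ?_⟩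
  · have hxy' := hD.1 x y hxy
    have hv : ∀ z, M.Adj v z → w = z := fun _ => hM.eq_of_adj_left hvw
    have hw : ∀ z, M.Adj w z → v = z := fun _ => hM.eq_of_adj_left hvw.symm
    have hne := hvw.ne
    have := hxy.symm
    grind
  · exact mem_insert_of_mem (mem_erase.2 ⟨fun hxw => hx (hxw ▸ hvw.snd_mem), hD.2 x hx⟩)

theorem IsGuardedBy.not_attackerWinsIn (hM : M.IsMatching) (hD : M.IsGuardedBy D) (t : ℕ) :
    ¬ AttackerWinsIn G t D := by
  induction t generalizing D with
  | zero => exact id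
  | succ t ih =>
    rintro ⟨v, hvD, hwin⟩
    obtain ⟨w, hvw, -⟩ := hM (not_imp_comm.1 (hD.2 v) hvD)
    have hwD : w ∈ D := not_not.1 ((hD.1 v w hvw).not.1 hvD)
    exact ih (hD.insert_erase hM hvw) (hwin w hwD (M.adj_sub hvw).symm)

end SimpleGraph.Subgraph

theorem SimpleGraph.IsBipartiteWith.exists_attackerWinsIn_of_ncard_lt [Fintype V] {A : Set V}
    {B : Finset V} (hG : G.IsBipartiteWith A B) {s : Set V} (hs : s ⊆ A)
    (hlt : (⋃ x ∈ s, G.neighborSet x).ncard < s.ncard) : ∃ t, AttackerWinsIn G t B := by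
  classical
  set N := ⋃ x ∈ s, G.neighborSet x
  have hNB : N ⊆ B :=
    Set.iUnion₂_subset fun x hx => isBipartiteWith_neighborSet_subset hG (hs hx)
  have hsN : Disjoint s.toFinset N.toFinset := by
    rw [Set.disjoint_toFinset]
    exact hG.disjoint.mono hs hNB
  have hBs : B ∩ s.toFinset = ∅ := by
    rw [← disjoint_iff_inter_eq_empty, ← Finset.disjoint_coe, Set.coe_toFinset]
    exact (hG.disjoint.mono_left hs).symm
  refine ⟨_, attackerWinsIn_of_card_lt (fun a ha u hua => ?_) hsN B ?_⟩
  · simpa [N] using ⟨a, Set.mem_toFinset.1 ha, hua.symm⟩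
  · rw [hBs, card_empty, zero_add, ← Set.ncard_eq_toFinset_card']
    calc #(B ∩ N.toFinset) ≤ #N.toFinset := card_le_card inter_subset_right
      _ < s.ncard := by rwa [← Set.ncard_eq_toFinset_card']

end

/-- Let `G` be a bipartite graph with bipartition `(A, B)` and let the guard set be
`D = B`.  Then `D` is an eternal dominating set of `G` iff `G` admits a matching
saturating `A`. -/
theorem stmt0 {V : Type*} [Fintype V] [DecidableEq V] (G : SimpleGraph V)
    (A B : Finset V)
    (hpart : ∀ v, v ∈ A ↔ v ∉ B)
    (hbip : ∀ u v, G.Adj u v → (u ∈ A ∧ v ∈ B) ∨ (u ∈ B ∧ v ∈ A)) :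
    gameValue G B = ⊤ ↔
      ∃ M : G.Subgraph, M.IsMatching ∧ (A : Set V) ⊆ M.verts := by
  classical
  have hG : G.IsBipartiteWith A B :=
    ⟨Set.disjoint_left.2 fun v hA hB => (hpart v).1 hA hB, fun u v huv => hbip u v huv⟩
  rw [gameValue_eq_top_iff]
  constructor
  · intro hsafe
    obtain ⟨M, hA, hM⟩ := SimpleGraph.exists_isMatching_of_forall_ncard_le hG fun s hs => by
      by_contra! hlt
      obtain ⟨t, ht⟩ := hG.exists_attackerWinsIn_of_ncard_lt hs hlt
      exact hsafe t ht
    exact ⟨M, hM, hA⟩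
  · rintro ⟨M, hM, hA⟩
    refine SimpleGraph.Subgraph.IsGuardedBy.not_attackerWinsIn hM
      ⟨fun u w huw => ?_, fun v hv => ?_⟩
    · rcases hbip u w (M.adj_sub huw) with ⟨hu, hw⟩ | ⟨hu, hw⟩
      · exact iff_of_false ((hpart u).1 hu) (not_not.2 hw)
      · exact iff_of_true hu ((hpart w).1 hw)
    · exact not_not.1 fun hvB => hv (hA ((hpart v).2 hvB))
end

section
/- Let G be a bipartite graph with bipartition (A, B) and D a set of guards. If Attacker wins in t turns on (G, D), then Attacker has a strategy winning in at most t turns in which he only ever attacks vertices of A, or a strategy winning in at most t turns in which he only ever attacks vertices of B. -/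
/-- Attacker wins within `t` turns while only ever attacking vertices of `S`. -/
def AttackerWinsInOn {V : Type*} [DecidableEq V] (G : SimpleGraph V) (S : Set V) :
    ℕ → Finset V → Prop
  | 0, _ => False
  | (t + 1), D => ∃ v, v ∈ S ∧ v ∉ D ∧
      ∀ u ∈ D, G.Adj u v → AttackerWinsInOn G S t (insert v (D.erase u))

section Aux

variable {V : Type*} [DecidableEq V] (G : SimpleGraph V)

lemma winsOn_mono (S : Set V) : ∀ (t : ℕ) (D : Finset V),
    AttackerWinsInOn G S t D → AttackerWinsInOn G S (t + 1) D
  | 0, _, h => h.elim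
  | (t + 1), D, ⟨v, hvS, hvD, hrec⟩ =>
      ⟨v, hvS, hvD, fun u hu hadj => winsOn_mono S t _ (hrec u hu hadj)⟩

lemma winsOn_mono_le (S : Set V) (D : Finset V) {t t' : ℕ} (h : t ≤ t')
    (hw : AttackerWinsInOn G S t D) : AttackerWinsInOn G S t' D := by
  obtain ⟨k, rfl⟩ := Nat.exists_eq_add_of_le h
  clear h
  induction k with
  | zero => exact hw
  | succ k ih => exact winsOn_mono G S (t + k) D ih

/-- Key exchange lemma: an Attacker strategy attacking only `B`-vertices that wins against
`insert v E` (with `v ∈ A`) also wins against `insert u E` when `u ∈ B` is adjacent to `v`. -/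
lemma winsOn_key (A B : Set V) (hpart : ∀ v, v ∈ A ↔ v ∉ B)
    (hbip : ∀ u v, G.Adj u v → (u ∈ A ∧ v ∈ B) ∨ (u ∈ B ∧ v ∈ A)) :
    ∀ (t : ℕ) (E : Finset V) (v u : V), v ∈ A → u ∈ B → G.Adj v u →
      v ∉ E → u ∉ E →
      AttackerWinsInOn G B t (insert v E) → AttackerWinsInOn G B t (insert u E)
  | 0, _, _, _, _, _, _, _, _, h => h.elim
  | (t + 1), E, v, u, hvA, huB, hadj, hvE, huE, ⟨w, hwB, hwD, hrec⟩ => by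
      by_cases hwu : w = u
      · subst hwu
        have h1 := hrec v (Finset.mem_insert_self v E) hadj
        rw [Finset.erase_insert hvE] at h1
        exact winsOn_mono G B t _ h1
      · refine ⟨w, hwB, ?_, ?_⟩
        · simp only [Finset.mem_insert, not_or] at hwD ⊢
          exact ⟨hwu, hwD.2⟩
        · intro x hx hxw
          have hxu : x ≠ u := by
            rintro rfl
            rcases hbip x w hxw with ⟨hA, _⟩ | ⟨_, hA⟩
            · exact (hpart x).1 hA huB
            · exact (hpart w).1 hA hwB
          have hxE : x ∈ E := by
            rcases Finset.mem_insert.1 hx with rfl | h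
            · exact absurd rfl hxu
            · exact h
          have hxv : x ≠ v := fun h => hvE (h ▸ hxE)
          have hvw : v ≠ w := by
            rintro rfl
            exact (hpart v).1 hvA hwB
          have h1 := hrec x (Finset.mem_insert_of_mem hxE) hxw
          have e1 : insert w ((insert v E).erase x)
              = insert v (insert w (E.erase x)) := by
            rw [Finset.erase_insert_of_ne hxv.symm, Finset.insert_comm]
          rw [e1] at h1
          have h2 := winsOn_key A B hpart hbip t (insert w (E.erase x)) v u hvA huB hadj
            (by
              intro hmem
              rcases Finset.mem_insert.1 hmem with rfl | hmem
              · exact hvw rfl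
              · exact hvE (Finset.mem_of_mem_erase hmem))
            (by
              intro hmem
              rcases Finset.mem_insert.1 hmem with rfl | hmem
              · exact hwu rfl
              · exact huE (Finset.mem_of_mem_erase hmem)) h1
          have e2 : insert u (insert w (E.erase x))
              = insert w ((insert u E).erase x) := by
            rw [Finset.erase_insert_of_ne hxu.symm, Finset.insert_comm]
          rwa [e2] at h2

/-- One step of the main induction, for a first attack on the `A` side. -/
lemma winsOn_side (A B : Set V) (hpart : ∀ v, v ∈ A ↔ v ∉ B)
    (hbip : ∀ u v, G.Adj u v → (u ∈ A ∧ v ∈ B) ∨ (u ∈ B ∧ v ∈ A))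
    (t : ℕ)
    (IH : ∀ D : Finset V, AttackerWinsIn G t D →
      AttackerWinsInOn G A t D ∨ AttackerWinsInOn G B t D)
    (D : Finset V) (v : V) (hvA : v ∈ A) (hvD : v ∉ D)
    (hrec : ∀ u ∈ D, G.Adj u v → AttackerWinsIn G t (insert v (D.erase u))) :
    AttackerWinsInOn G A (t + 1) D ∨ AttackerWinsInOn G B (t + 1) D := by
  by_cases hall : ∀ u ∈ D, G.Adj u v → AttackerWinsInOn G A t (insert v (D.erase u))
  · exact Or.inl ⟨v, hvA, hvD, hall⟩
  · push_neg at hall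
    obtain ⟨u, huD, hadj, hnA⟩ := hall
    have hB := (IH _ (hrec u huD hadj)).resolve_left hnA
    have huB : u ∈ B := by
      rcases hbip u v hadj with ⟨_, hvB⟩ | ⟨h, _⟩
      · exact absurd hvB ((hpart v).1 hvA)
      · exact h
    have h1 : AttackerWinsInOn G B t (insert u (D.erase u)) :=
      winsOn_key G A B hpart hbip t (D.erase u) v u hvA huB hadj.symm
        (fun h => hvD (Finset.mem_of_mem_erase h)) (Finset.notMem_erase u D) hB
    rw [Finset.insert_erase huD] at h1
    exact Or.inr (winsOn_mono G B t D h1)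

lemma winsOn_main (A B : Set V) (hpart : ∀ v, v ∈ A ↔ v ∉ B)
    (hbip : ∀ u v, G.Adj u v → (u ∈ A ∧ v ∈ B) ∨ (u ∈ B ∧ v ∈ A)) :
    ∀ (t : ℕ) (D : Finset V), AttackerWinsIn G t D →
      AttackerWinsInOn G A t D ∨ AttackerWinsInOn G B t D := by
  intro t
  induction t with
  | zero => exact fun D h => h.elim
  | succ t IH =>
    intro D h
    obtain ⟨v, hvD, hrec⟩ := h
    by_cases hvA : v ∈ A
    · exact winsOn_side G A B hpart hbip t IH D v hvA hvD hrec
    · have hvB : v ∈ B := by have := hpart v; tauto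
      have hpart' : ∀ w, w ∈ B ↔ w ∉ A := by intro w; have := hpart w; tauto
      have hbip' : ∀ x y, G.Adj x y → (x ∈ B ∧ y ∈ A) ∨ (x ∈ A ∧ y ∈ B) :=
        fun x y hxy => (hbip x y hxy).symm
      exact (winsOn_side G B A hpart' hbip' t (fun D' h' => (IH D' h').symm)
        D v hvB hvD hrec).symm

end Aux

/-- If `G` is bipartite with bipartition `(A, B)` and Attacker wins in `t` turns on
`(G, D)`, then he can win in at most `t` turns attacking only vertices of `A`, or
in at most `t` turns attacking only vertices of `B`. -/
theorem stmt1 {V : Type*} [DecidableEq V] (G : SimpleGraph V) (A B : Set V)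
    (hpart : ∀ v, v ∈ A ↔ v ∉ B)
    (hbip : ∀ u v, G.Adj u v → (u ∈ A ∧ v ∈ B) ∨ (u ∈ B ∧ v ∈ A))
    (D : Finset V) (t : ℕ) (h : gameValue G D ≤ (t : ℕ∞)) :
    AttackerWinsInOn G A t D ∨ AttackerWinsInOn G B t D := by
  have hex : ∃ t' ≤ t, AttackerWinsIn G t' D := by
    by_contra hc
    push_neg at hc
    have hlb : (t : ℕ∞) + 1 ≤ gameValue G D := by
      apply le_sInf
      rintro n ⟨t', rfl, hw⟩
      have ht' : t + 1 ≤ t' := by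
        by_contra hlt
        exact hc t' (by omega) hw
      exact_mod_cast (by exact_mod_cast ht' : ((t + 1 : ℕ) : ℕ∞) ≤ (t' : ℕ∞))
    have : (t : ℕ∞) + 1 ≤ (t : ℕ∞) := hlb.trans h
    have : ((t + 1 : ℕ) : ℕ∞) ≤ ((t : ℕ) : ℕ∞) := by push_cast; exact this
    have := Nat.cast_le.mp this
    omega
  obtain ⟨t', ht', hw⟩ := hex
  rcases winsOn_main G A B hpart hbip t' D hw with h1 | h1
  · exact Or.inl (winsOn_mono_le G A D ht' h1)
  · exact Or.inr (winsOn_mono_le G B D ht' h1)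
end

section
/- Let G be a bipartite graph and D a set of guards. Let G' be the graph on the same vertex set obtained from G by deleting every edge with both endpoints in D and every edge with both endpoints in V(G) \ D. Then G' is bipartite with bipartition (D, V(G) \ D), and t_G(D) = t_{G'}(D). -/
/-- The graph obtained from `G` by deleting every edge with both endpoints in `D`
and every edge with both endpoints outside `D`. -/
def guardCut {V : Type*} [DecidableEq V] (G : SimpleGraph V) (D : Finset V) :
    SimpleGraph V :=
  SimpleGraph.fromRel (fun u v => G.Adj u v ∧ ¬(u ∈ D ↔ v ∈ D))

section Aux

variable {V : Type*} [DecidableEq V]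

/-- The "vertex-deletion recursion" game: Attacker attacks a vertex `v ∈ P`
outside the removed set `X` and outside the guards `D`; every possible responding
guard `u` is consumed together with `v` (both are added to `X`). -/
def CWins (G : SimpleGraph V) (P : Set V) : ℕ → Finset V → Finset V → Prop
  | 0, _, _ => False
  | (t + 1), X, D => ∃ v, v ∈ P ∧ v ∉ X ∧ v ∉ D ∧
      ∀ u ∈ D, G.Adj u v → CWins G P t (insert u (insert v X)) (D.erase u)

lemma cwins_mono {G : SimpleGraph V} {P : Set V} :
    ∀ {t : ℕ} {X D : Finset V}, CWins G P t X D → CWins G P (t + 1) X D := by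
  intro t
  induction t with
  | zero => intro X D h; exact h.elim
  | succ t ih =>
    rintro X D ⟨v, hvP, hvX, hvD, hall⟩
    exact ⟨v, hvP, hvX, hvD, fun u hu hadj => ih (hall u hu hadj)⟩

lemma wins_anti {G H : SimpleGraph V} (hle : ∀ u v, H.Adj u v → G.Adj u v) :
    ∀ {t : ℕ} {D : Finset V}, AttackerWinsIn G t D → AttackerWinsIn H t D := by
  intro t
  induction t with
  | zero => intro D h; exact h
  | succ t ih =>
    rintro D ⟨v, hv, hall⟩
    exact ⟨v, hv, fun u hu hadj => ih (hall u hu (hle u v hadj))⟩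

/-- In any graph, if Attacker wins the real game then it wins the recursion game:
equivalently Defender can survive the real game given recursion survival, by
answering attacks on removed vertices with the paired "pocket" guard. -/
lemma wins_to_cwins {K : SimpleGraph V} {D₀ : Finset V} :
    ∀ (t : ℕ) (F : Finset (V × V)) (X D Q : Finset V),
      (∀ p ∈ F, K.Adj p.1 p.2) →
      (∀ x : V, x ∈ X ↔ ∃ p ∈ F, x = p.1 ∨ x = p.2) →
      (∀ p ∈ F, ∀ q ∈ F, p ≠ q → p.1 ≠ q.1 ∧ p.1 ≠ q.2 ∧ p.2 ≠ q.1 ∧ p.2 ≠ q.2) →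
      (∀ x ∈ D, x ∉ X) →
      (∀ x ∈ D₀, x ∈ D ∨ x ∈ X) →
      (∀ x : V, x ∈ Q ↔ x ∈ D ∨ ∃ p ∈ F, x = p.1) →
      ¬ CWins K {v : V | v ∉ D₀} t X D → ¬ AttackerWinsIn K t Q := by
  intro t
  induction t with
  | zero => intro F X D Q _ _ _ _ _ _ _ h; exact h
  | succ t ih =>
    intro F X D Q hF hX hdisj hDX hD₀ hQ hnc hw
    obtain ⟨v, hvQ, hall⟩ := hw
    by_cases hvX : v ∈ X
    · -- v is a removed vertex: it must be the unguarded end of a pocket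
      obtain ⟨p, hpF, hv12⟩ := (hX v).mp hvX
      have hvp2 : v = p.2 := by
        rcases hv12 with h1 | h2
        · exact absurd ((hQ v).mpr (Or.inr ⟨p, hpF, h1⟩)) hvQ
        · exact h2
      have hgQ : p.1 ∈ Q := (hQ p.1).mpr (Or.inr ⟨p, hpF, rfl⟩)
      have hadj : K.Adj p.1 v := hvp2 ▸ hF p hpF
      have hw2 := hall p.1 hgQ hadj
      -- toggle pocket p
      have hp12 : p.1 ≠ p.2 := (hF p hpF).ne
      refine ih (insert (p.2, p.1) (F.erase p)) X D (insert v (Q.erase p.1))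
        ?_ ?_ ?_ hDX hD₀ ?_ (fun hc => hnc (cwins_mono hc)) hw2
      · intro q hq
        rcases Finset.mem_insert.mp hq with rfl | hq
        · exact (hF p hpF).symm
        · exact hF q (Finset.mem_of_mem_erase hq)
      · intro x
        rw [hX x]
        constructor
        · rintro ⟨q, hqF, hxq⟩
          by_cases hqp : q = p
          · subst hqp
            exact ⟨(q.2, q.1), Finset.mem_insert_self _ _, hxq.symm⟩
          · exact ⟨q, Finset.mem_insert_of_mem (Finset.mem_erase.mpr ⟨hqp, hqF⟩), hxq⟩
        · rintro ⟨q, hqF, hxq⟩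
          rcases Finset.mem_insert.mp hqF with rfl | hq
          · exact ⟨p, hpF, hxq.symm⟩
          · exact ⟨q, Finset.mem_of_mem_erase hq, hxq⟩
      · -- pairwise disjointness for the toggled pocket family
        intro a ha b hb hab
        have key : ∀ c ∈ F.erase p,
            (p.2, p.1).1 ≠ c.1 ∧ (p.2, p.1).1 ≠ c.2 ∧ (p.2, p.1).2 ≠ c.1 ∧ (p.2, p.1).2 ≠ c.2 := by
          intro c hc
          obtain ⟨hne, hcF⟩ := Finset.mem_erase.mp hc
          obtain ⟨h1, h2, h3, h4⟩ := hdisj p hpF c hcF (Ne.symm hne)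
          exact ⟨h3, h4, h1, h2⟩
        rcases Finset.mem_insert.mp ha with rfl | ha' <;>
          rcases Finset.mem_insert.mp hb with rfl | hb'
        · exact absurd rfl hab
        · exact key b hb'
        · obtain ⟨h1, h2, h3, h4⟩ := key a ha'
          exact ⟨h1.symm, h3.symm, h2.symm, h4.symm⟩
        · exact hdisj a (Finset.mem_of_mem_erase ha') b (Finset.mem_of_mem_erase hb') hab
      · intro x
        rw [Finset.mem_insert, Finset.mem_erase]
        constructor
        · rintro (h | ⟨hxp1, hxQ⟩)
          · exact Or.inr ⟨(p.2, p.1), Finset.mem_insert_self _ _, h.trans hvp2⟩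
          · rcases (hQ x).mp hxQ with hxD | ⟨q, hqF, hxq⟩
            · exact Or.inl hxD
            · have hqp : q ≠ p := fun h => hxp1 (h ▸ hxq)
              exact Or.inr ⟨q, Finset.mem_insert_of_mem (Finset.mem_erase.mpr ⟨hqp, hqF⟩), hxq⟩
        · rintro (hxD | ⟨q, hqF, hxq⟩)
          · refine Or.inr ⟨?_, (hQ x).mpr (Or.inl hxD)⟩
            intro h
            exact hDX x hxD ((hX x).mpr ⟨p, hpF, Or.inl h⟩)
          · rcases Finset.mem_insert.mp hqF with rfl | hq
            · exact Or.inl (hxq.trans hvp2.symm)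
            · obtain ⟨hne, hqF'⟩ := Finset.mem_erase.mp hq
              obtain ⟨h1, _, _, _⟩ := hdisj q hqF' p hpF hne
              exact Or.inr ⟨hxq ▸ h1, (hQ x).mpr (Or.inr ⟨q, hqF', hxq⟩)⟩
    · -- v is an active vertex: use the recursion Defender's answer
      have hvD : v ∉ D := fun h => hvQ ((hQ v).mpr (Or.inl h))
      have hvP : v ∈ {v : V | v ∉ D₀} := by
        intro hvD₀
        rcases hD₀ v hvD₀ with h | h
        · exact hvD h
        · exact hvX h
      have hex : ∃ u ∈ D, K.Adj u v ∧
          ¬ CWins K {v : V | v ∉ D₀} t (insert u (insert v X)) (D.erase u) := by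
        by_contra hno
        push_neg at hno
        exact hnc ⟨v, hvP, hvX, hvD, fun u hu hadj => hno u hu hadj⟩
      obtain ⟨u, huD, hadj, hnc'⟩ := hex
      have huQ : u ∈ Q := (hQ u).mpr (Or.inl huD)
      have hw2 := hall u huQ hadj
      have huX : u ∉ X := hDX u huD
      refine ih (insert (v, u) F) (insert u (insert v X)) (D.erase u)
        (insert v (Q.erase u)) ?_ ?_ ?_ ?_ ?_ ?_ hnc' hw2
      · intro q hq
        rcases Finset.mem_insert.mp hq with rfl | hq
        · exact hadj.symm
        · exact hF q hq
      · intro x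
        rw [Finset.mem_insert, Finset.mem_insert, hX x]
        constructor
        · rintro (h | h | ⟨q, hqF, hxq⟩)
          · exact ⟨(v, u), Finset.mem_insert_self _ _, Or.inr h⟩
          · exact ⟨(v, u), Finset.mem_insert_self _ _, Or.inl h⟩
          · exact ⟨q, Finset.mem_insert_of_mem hqF, hxq⟩
        · rintro ⟨q, hqF, hxq⟩
          rcases Finset.mem_insert.mp hqF with rfl | hq
          · rcases hxq with h | h
            · exact Or.inr (Or.inl h)
            · exact Or.inl h
          · exact Or.inr (Or.inr ⟨q, hq, hxq⟩)
      · intro a ha b hb hab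
        have hnew : ∀ c ∈ F, (v, u).1 ≠ c.1 ∧ (v, u).1 ≠ c.2 ∧ (v, u).2 ≠ c.1 ∧ (v, u).2 ≠ c.2 := by
          intro c hcF
          refine ⟨?_, ?_, ?_, ?_⟩ <;> intro h
          · exact hvX ((hX v).mpr ⟨c, hcF, Or.inl h⟩)
          · exact hvX ((hX v).mpr ⟨c, hcF, Or.inr h⟩)
          · exact huX ((hX u).mpr ⟨c, hcF, Or.inl h⟩)
          · exact huX ((hX u).mpr ⟨c, hcF, Or.inr h⟩)
        rcases Finset.mem_insert.mp ha with rfl | ha' <;>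
          rcases Finset.mem_insert.mp hb with rfl | hb'
        · exact absurd rfl hab
        · exact hnew b hb'
        · obtain ⟨h1, h2, h3, h4⟩ := hnew a ha'
          exact ⟨h1.symm, h3.symm, h2.symm, h4.symm⟩
        · exact hdisj a ha' b hb' hab
      · intro x hx
        obtain ⟨hxu, hxD⟩ := Finset.mem_erase.mp hx
        simp only [Finset.mem_insert]
        push_neg
        exact ⟨hxu, fun h => hvD (h ▸ hxD), hDX x hxD⟩
      · intro x hx
        rcases hD₀ x hx with h | h
        · by_cases hxu : x = u
          · exact Or.inr (Finset.mem_insert.mpr (Or.inl hxu))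
          · exact Or.inl (Finset.mem_erase.mpr ⟨hxu, h⟩)
        · exact Or.inr (Finset.mem_insert_of_mem (Finset.mem_insert_of_mem h))
      · intro x
        rw [Finset.mem_insert, Finset.mem_erase]
        constructor
        · rintro (h | ⟨hxu, hxQ⟩)
          · exact Or.inr ⟨(v, u), Finset.mem_insert_self _ _, h⟩
          · rcases (hQ x).mp hxQ with hxD | ⟨q, hqF, hxq⟩
            · exact Or.inl (Finset.mem_erase.mpr ⟨hxu, hxD⟩)
            · exact Or.inr ⟨q, Finset.mem_insert_of_mem hqF, hxq⟩
        · rintro (hxDe | ⟨q, hqF, hxq⟩)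
          · obtain ⟨hxu, hxD⟩ := Finset.mem_erase.mp hxDe
            exact Or.inr ⟨hxu, (hQ x).mpr (Or.inl hxD)⟩
          · rcases Finset.mem_insert.mp hqF with rfl | hq
            · exact Or.inl hxq
            · refine Or.inr ⟨?_, (hQ x).mpr (Or.inr ⟨q, hq, hxq⟩)⟩
              intro h
              exact huX ((hX u).mpr ⟨q, hq, Or.inl (h ▸ hxq : u = q.1)⟩)

lemma guardCut_adj {G : SimpleGraph V} {D : Finset V} {u v : V} :
    (guardCut G D).Adj u v ↔ G.Adj u v ∧ ¬(u ∈ D ↔ v ∈ D) := by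
  unfold guardCut
  rw [SimpleGraph.fromRel_adj]
  constructor
  · rintro ⟨hne, h | h⟩
    · exact h
    · exact ⟨h.1.symm, fun hiff => h.2 hiff.symm⟩
  · intro h
    exact ⟨h.1.ne, Or.inl h⟩

/-- The recursion game only depends on the crossing edges. -/
lemma cwins_graph {G : SimpleGraph V} {D₀ : Finset V} :
    ∀ (t : ℕ) (X D : Finset V), D ⊆ D₀ →
      (CWins (guardCut G D₀) {v : V | v ∉ D₀} t X D ↔ CWins G {v : V | v ∉ D₀} t X D) := by
  intro t
  induction t with
  | zero => intro X D _; exact Iff.rfl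
  | succ t ih =>
    intro X D hsub
    constructor
    · rintro ⟨v, hvP, hvX, hvD, hall⟩
      refine ⟨v, hvP, hvX, hvD, fun u hu hadj => ?_⟩
      have hadj' : (guardCut G D₀).Adj u v := by
        rw [guardCut_adj]
        refine ⟨hadj, fun hiff => hvP (hiff.mp (hsub hu))⟩
      exact (ih _ _ (fun x hx => hsub (Finset.mem_of_mem_erase hx))).mp (hall u hu hadj')
    · rintro ⟨v, hvP, hvX, hvD, hall⟩
      refine ⟨v, hvP, hvX, hvD, fun u hu hadj => ?_⟩
      have hadj' : G.Adj u v := (guardCut_adj.mp hadj).1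
      exact (ih _ _ (fun x hx => hsub (Finset.mem_of_mem_erase hx))).mpr (hall u hu hadj')

/-- The recursion game is insensitive to changes outside the relevant part. -/
lemma cwins_transfer {G : SimpleGraph V} {T : Set V} :
    ∀ (t : ℕ) (X₁ D₁ X₂ D₂ : Finset V),
      (∀ w ∈ T, (w ∈ X₁ ↔ w ∈ X₂)) → (∀ w ∈ T, (w ∈ D₁ ↔ w ∈ D₂)) →
      (∀ v ∈ T, ∀ u : V, G.Adj u v → (u ∈ D₁ ↔ u ∈ D₂)) →
      CWins G T t X₁ D₁ → CWins G T t X₂ D₂ := by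
  intro t
  induction t with
  | zero => intro _ _ _ _ _ _ _ h; exact h
  | succ t ih =>
    rintro X₁ D₁ X₂ D₂ hX hD hR ⟨v, hvP, hvX, hvD, hall⟩
    refine ⟨v, hvP, fun h => hvX ((hX v hvP).mpr h), fun h => hvD ((hD v hvP).mpr h), ?_⟩
    intro u hu hadj
    have hu1 : u ∈ D₁ := (hR v hvP u hadj).mpr hu
    refine ih _ _ _ _ ?_ ?_ ?_ (hall u hu1 hadj)
    · intro w hw
      simp only [Finset.mem_insert]
      rw [hX w hw]
    · intro w hw
      simp only [Finset.mem_erase]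
      rw [hD w hw]
    · intro v' hv' u' hadj'
      simp only [Finset.mem_erase]
      rw [hR v' hv' u' hadj']

/-- De-interleaving: a recursion-game win splits into a win attacking only one
side of the bipartition. -/
lemma cwins_split {G : SimpleGraph V} {A B : Set V}
    (hpart : ∀ v, v ∈ A ↔ v ∉ B)
    (hbip : ∀ u v, G.Adj u v → (u ∈ A ∧ v ∈ B) ∨ (u ∈ B ∧ v ∈ A))
    {D₀ : Finset V} :
    ∀ (t : ℕ) (X D : Finset V), D ⊆ D₀ →
      CWins G {v : V | v ∉ D₀} t X D →
      CWins G {v : V | v ∈ B ∧ v ∉ D₀} t X D ∨ CWins G {v : V | v ∈ A ∧ v ∉ D₀} t X D := by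
  intro t
  induction t with
  | zero => intro X D _ h; exact h.elim
  | succ t ih =>
    rintro X D hsub ⟨v, hvP, hvX, hvD, hall⟩
    have hvD₀ : v ∉ D₀ := hvP
    by_cases hvB : v ∈ B
    · -- attack on the B side
      by_cases hall0 : ∀ u ∈ D, G.Adj u v →
          CWins G {v : V | v ∈ B ∧ v ∉ D₀} t (insert u (insert v X)) (D.erase u)
      · exact Or.inl ⟨v, ⟨hvB, hvD₀⟩, hvX, hvD, hall0⟩
      · push_neg at hall0
        obtain ⟨u₀, hu₀D, hadj₀, hnc0⟩ := hall0
        have hu₀A : u₀ ∈ A := by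
          rcases hbip u₀ v hadj₀ with ⟨h, _⟩ | ⟨_, hvA⟩
          · exact h
          · exact absurd hvB ((hpart v).mp hvA)
        have hdisj := ih _ _ (fun x hx => hsub (Finset.mem_of_mem_erase hx))
          (hall u₀ hu₀D hadj₀)
        have h1 : CWins G {v : V | v ∈ A ∧ v ∉ D₀} t (insert u₀ (insert v X)) (D.erase u₀) := by
          rcases hdisj with h | h
          · exact absurd h hnc0
          · exact h
        have h2 : CWins G {v : V | v ∈ A ∧ v ∉ D₀} t X D := by
          refine cwins_transfer t _ _ _ _ ?_ ?_ ?_ h1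
          · rintro w ⟨hwA, hwD₀⟩
            simp only [Finset.mem_insert]
            constructor
            · rintro (rfl | rfl | h)
              · exact absurd (hsub hu₀D) hwD₀
              · exact absurd hvB ((hpart w).mp hwA)
              · exact h
            · intro h
              exact Or.inr (Or.inr h)
          · rintro w ⟨hwA, hwD₀⟩
            simp only [Finset.mem_erase]
            constructor
            · exact fun h => h.2
            · intro h
              exact ⟨fun hh => hwD₀ (hh ▸ hsub hu₀D), h⟩
          · rintro v' ⟨hv'A, hv'D₀⟩ u' hadj'
            have hu'ne : u' ≠ u₀ := by
              rintro rfl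
              rcases hbip u' v' hadj' with ⟨_, hv'B⟩ | ⟨hu'B, _⟩
              · exact ((hpart v').mp hv'A) hv'B
              · exact ((hpart u').mp hu₀A) hu'B
            simp only [Finset.mem_erase]
            exact ⟨fun h => h.2, fun h => ⟨hu'ne, h⟩⟩
        exact Or.inr (cwins_mono h2)
    · -- attack on the A side
      have hvA : v ∈ A := (hpart v).mpr hvB
      by_cases hall1 : ∀ u ∈ D, G.Adj u v →
          CWins G {v : V | v ∈ A ∧ v ∉ D₀} t (insert u (insert v X)) (D.erase u)
      · exact Or.inr ⟨v, ⟨hvA, hvD₀⟩, hvX, hvD, hall1⟩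
      · push_neg at hall1
        obtain ⟨u₀, hu₀D, hadj₀, hnc0⟩ := hall1
        have hu₀B : u₀ ∈ B := by
          rcases hbip u₀ v hadj₀ with ⟨_, hvB'⟩ | ⟨h, _⟩
          · exact absurd hvB' hvB
          · exact h
        have hdisj := ih _ _ (fun x hx => hsub (Finset.mem_of_mem_erase hx))
          (hall u₀ hu₀D hadj₀)
        have h1 : CWins G {v : V | v ∈ B ∧ v ∉ D₀} t (insert u₀ (insert v X)) (D.erase u₀) := by
          rcases hdisj with h | h
          · exact h
          · exact absurd h hnc0
        have h2 : CWins G {v : V | v ∈ B ∧ v ∉ D₀} t X D := by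
          refine cwins_transfer t _ _ _ _ ?_ ?_ ?_ h1
          · rintro w ⟨hwB, hwD₀⟩
            simp only [Finset.mem_insert]
            constructor
            · rintro (rfl | rfl | h)
              · exact absurd (hsub hu₀D) hwD₀
              · exact absurd hwB hvB
              · exact h
            · intro h
              exact Or.inr (Or.inr h)
          · rintro w ⟨hwB, hwD₀⟩
            simp only [Finset.mem_erase]
            constructor
            · exact fun h => h.2
            · intro h
              exact ⟨fun hh => hwD₀ (hh ▸ hsub hu₀D), h⟩
          · rintro v' ⟨hv'B, hv'D₀⟩ u' hadj'
            have hu'ne : u' ≠ u₀ := by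
              rintro rfl
              rcases hbip u' v' hadj' with ⟨hu'A, _⟩ | ⟨_, hv'A⟩
              · exact ((hpart u').mp hu'A) hu₀B
              · exact ((hpart v').mp hv'A) hv'B
            simp only [Finset.mem_erase]
            exact ⟨fun h => h.2, fun h => ⟨hu'ne, h⟩⟩
        exact Or.inl (cwins_mono h2)

/-- If all attacks of a recursion win lie on an independent side `C`, the
Attacker can realize the win in the real game: pocket guards sit on `C` and
can never respond. -/
lemma cwins_real {G : SimpleGraph V} {C P : Set V}
    (hC : ∀ x ∈ C, ∀ y ∈ C, ¬ G.Adj x y) (hPC : ∀ v ∈ P, v ∈ C) :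
    ∀ (t : ℕ) (X D M : Finset V),
      (∀ m ∈ M, m ∈ X) → (∀ m ∈ M, m ∉ D) → (∀ m ∈ M, m ∈ C) →
      CWins G P t X D → AttackerWinsIn G t (M ∪ D) := by
  intro t
  induction t with
  | zero => intro X D M _ _ _ h; exact h
  | succ t ih =>
    rintro X D M hMX hMD hMC ⟨v, hvP, hvX, hvD, hall⟩
    refine ⟨v, ?_, ?_⟩
    · intro h
      rcases Finset.mem_union.mp h with h | h
      · exact hvX (hMX v h)
      · exact hvD h
    · intro w hw hadj
      rcases Finset.mem_union.mp hw with hwM | hwD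
      · exact absurd hadj (hC w (hMC w hwM) v (hPC v hvP))
      · have hwin := ih _ _ (insert v M) ?_ ?_ ?_ (hall w hwD hadj)
        · have heq : insert v M ∪ D.erase w = insert v ((M ∪ D).erase w) := by
            ext x
            simp only [Finset.mem_insert, Finset.mem_union, Finset.mem_erase]
            have hMw : x ∈ M → x ≠ w := fun hxM h => hMD x hxM (h ▸ hwD)
            tauto
          rwa [heq] at hwin
        · intro m hm
          rcases Finset.mem_insert.mp hm with h | hm
          · rw [h]; exact Finset.mem_insert_of_mem (Finset.mem_insert_self _ _)
          · exact Finset.mem_insert_of_mem (Finset.mem_insert_of_mem (hMX m hm))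
        · intro m hm
          rcases Finset.mem_insert.mp hm with h | hm
          · rw [h]; exact fun hc => hvD (Finset.mem_of_mem_erase hc)
          · exact fun hc => hMD m hm (Finset.mem_of_mem_erase hc)
        · intro m hm
          rcases Finset.mem_insert.mp hm with h | hm
          · rw [h]; exact hPC v hvP
          · exact hMC m hm

end Aux

/-- Let `G` be bipartite and `D` a set of guards.  Deleting the edges inside `D` and
inside `V \ D` yields a bipartite graph `G'` with bipartition `(D, V \ D)` such that
`t_G(D) = t_{G'}(D)`. -/
theorem stmt2 {V : Type*} [DecidableEq V] (G : SimpleGraph V) (A B : Set V)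
    (hpart : ∀ v, v ∈ A ↔ v ∉ B)
    (hbip : ∀ u v, G.Adj u v → (u ∈ A ∧ v ∈ B) ∨ (u ∈ B ∧ v ∈ A))
    (D : Finset V) :
    (∀ u v, (guardCut G D).Adj u v → (u ∈ D ∧ v ∉ D) ∨ (u ∉ D ∧ v ∈ D)) ∧
      gameValue G D = gameValue (guardCut G D) D := by
  constructor
  · intro u v h
    have h' := guardCut_adj.mp h
    by_cases hu : u ∈ D <;> by_cases hv : v ∈ D
    · exact absurd (Iff.intro (fun _ => hv) (fun _ => hu)) h'.2
    · exact Or.inl ⟨hu, hv⟩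
    · exact Or.inr ⟨hu, hv⟩
    · exact absurd (Iff.intro (fun h => absurd h hu) (fun h => absurd h hv)) h'.2
  · have key : ∀ t : ℕ, AttackerWinsIn G t D ↔ AttackerWinsIn (guardCut G D) t D := by
      intro t
      constructor
      · exact wins_anti (fun u v h => (guardCut_adj.mp h).1)
      · intro h
        have h1 : CWins (guardCut G D) {v : V | v ∉ D} t ∅ D := by
          by_contra hc
          refine wins_to_cwins t ∅ ∅ D D ?_ ?_ ?_ ?_ ?_ ?_ hc h
          · intro p hp; exact absurd hp (Finset.notMem_empty p)
          · intro x
            simp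
          · intro p hp; exact absurd hp (Finset.notMem_empty p)
          · intro x _; exact Finset.notMem_empty x
          · intro x hx; exact Or.inl hx
          · intro x
            simp
        have h2 : CWins G {v : V | v ∉ D} t ∅ D :=
          (cwins_graph t ∅ D (Finset.Subset.refl D)).mp h1
        have h3 := cwins_split hpart hbip t ∅ D (Finset.Subset.refl D) h2
        rcases h3 with h3 | h3
        · have hwin := cwins_real (C := B) (P := {v : V | v ∈ B ∧ v ∉ D})
            ?_ ?_ t ∅ D ∅ ?_ ?_ ?_ h3
          · rwa [Finset.empty_union] at hwin
          · intro x hx y hy hadj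
            rcases hbip x y hadj with ⟨hxA, _⟩ | ⟨_, hyA⟩
            · exact (hpart x).mp hxA hx
            · exact (hpart y).mp hyA hy
          · rintro v ⟨hvB, _⟩; exact hvB
          · intro m hm; exact absurd hm (Finset.notMem_empty m)
          · intro m hm; exact absurd hm (Finset.notMem_empty m)
          · intro m hm; exact absurd hm (Finset.notMem_empty m)
        · have hwin := cwins_real (C := A) (P := {v : V | v ∈ A ∧ v ∉ D})
            ?_ ?_ t ∅ D ∅ ?_ ?_ ?_ h3
          · rwa [Finset.empty_union] at hwin
          · intro x hx y hy hadj
            rcases hbip x y hadj with ⟨_, hyB⟩ | ⟨hxB, _⟩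
            · exact (hpart y).mp hy hyB
            · exact (hpart x).mp hx hxB
          · rintro v ⟨hvA, _⟩; exact hvA
          · intro m hm; exact absurd hm (Finset.notMem_empty m)
          · intro m hm; exact absurd hm (Finset.notMem_empty m)
          · intro m hm; exact absurd hm (Finset.notMem_empty m)
    unfold gameValue
    congr 1
    ext n
    simp only [Set.mem_setOf_eq]
    constructor
    · rintro ⟨t, rfl, hw⟩
      exact ⟨t, rfl, (key t).mp hw⟩
    · rintro ⟨t, rfl, hw⟩
      exact ⟨t, rfl, (key t).mpr hw⟩
end

section
/- Let G be a bipartite graph and D a set of guards with |D| = g. If t_G(D) < +∞, then t_G(D) ≤ g + 1. -/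
/-!
Let `A ∪ B` be the bipartition. Defender survives forever as long as the unguarded vertices
of `A` can be matched into the guards in `B`, and those of `B` into the guards in `A`: an
attacked `v ∈ A` is answered by its partner `u`, after which the rest of the first matching
still works and the second one is extended by `u ↦ v`. So if `t_G(D) < ∞`, one matching, say
the one for `A`, fails. Attacker then keeps attacking unguarded vertices of `A`: every answer
moves a guard from `B` to `A` and leaves the matching failing, so after at most `|D ∩ B| ≤ g`
turns an attack cannot be answered.
-/

namespace Finset

variable {V : Type*} [DecidableEq V] {A B : Set V} {D : Finset V} {u v : V}

theorem coe_insert_erase_inter_of_notMem (hvB : v ∉ B) :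
    (↑(insert v (D.erase u)) : Set V) ∩ B = (↑D ∩ B) \ {u} := by
  ext x
  simp only [coe_insert, coe_erase, Set.mem_inter_iff, Set.mem_insert_iff,
    Set.mem_sdiff, mem_coe, Set.mem_singleton_iff]
  grind

theorem sdiff_coe_insert_erase_of_notMem (huA : u ∉ A) :
    A \ (↑(insert v (D.erase u)) : Set V) = (A \ ↑D) \ {v} := by
  ext x
  simp only [coe_insert, coe_erase, Set.mem_insert_iff, Set.mem_sdiff,
    mem_coe, Set.mem_singleton_iff]
  grind

end Finset

namespace SimpleGraph

variable {V : Type*} {G : SimpleGraph V} {S S' T T' : Set V}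

def HasMatchingInto (G : SimpleGraph V) (S T : Set V) : Prop :=
  ∃ f : V → V, Set.InjOn f S ∧ Set.MapsTo f S T ∧ ∀ x ∈ S, G.Adj x (f x)

theorem hasMatchingInto_empty (T : Set V) : G.HasMatchingInto ∅ T :=
  ⟨id, Set.injOn_empty _, Set.mapsTo_empty _ _, fun _ h => h.elim⟩

theorem HasMatchingInto.mono (h : G.HasMatchingInto S T) (hS : S' ⊆ S) (hT : T ⊆ T') :
    G.HasMatchingInto S' T' :=
  let ⟨f, hinj, hmaps, hadj⟩ := h
  ⟨f, hinj.mono hS, (hmaps.mono_left hS).mono_right hT, fun x hx => hadj x (hS hx)⟩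

theorem HasMatchingInto.insert {a b : V} (h : G.HasMatchingInto S T) (ha : a ∉ S)
    (hb : b ∉ T) (hab : G.Adj a b) : G.HasMatchingInto (insert a S) (insert b T) := by
  classical
  obtain ⟨f, hinj, hmaps, hadj⟩ := h
  have hfa : Set.EqOn (Function.update f a b) f S := fun x hx =>
    Function.update_of_ne (ne_of_mem_of_not_mem hx ha) _ _
  refine ⟨Function.update f a b, ?_, ?_, ?_⟩
  · refine (Set.injOn_insert ha).2 ⟨hinj.congr hfa.symm, ?_⟩
    rw [Function.update_self, hfa.image_eq]
    exact fun hbT => hb (hmaps.image_subset hbT)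
  · refine Set.forall_mem_insert.2 ⟨by simp, fun x hx => ?_⟩
    rw [hfa hx]
    exact Set.mem_insert_of_mem _ (hmaps hx)
  · refine Set.forall_mem_insert.2 ⟨by simpa using hab, fun x hx => ?_⟩
    rw [hfa hx]
    exact hadj x hx

theorem HasMatchingInto.exists_adj_diff_singleton {a : V} (h : G.HasMatchingInto S T)
    (ha : a ∈ S) : ∃ b ∈ T, G.Adj a b ∧ G.HasMatchingInto (S \ {a}) (T \ {b}) := by
  obtain ⟨f, hinj, hmaps, hadj⟩ := h
  refine ⟨f a, hmaps ha, hadj a ha, f, hinj.mono Set.sdiff_subset, fun x hx => ?_,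
    fun x hx => hadj x hx.1⟩
  exact ⟨hmaps hx.1, fun hfx => hx.2 (hinj hx.1 ha hfx)⟩

variable {A B : Set V} {D : Finset V}

def HasGuardMatchings (G : SimpleGraph V) (A B : Set V) (D : Finset V) : Prop :=
  G.HasMatchingInto (A \ ↑D) (↑D ∩ B) ∧ G.HasMatchingInto (B \ ↑D) (↑D ∩ A)

theorem hasGuardMatchings_comm : G.HasGuardMatchings A B D ↔ G.HasGuardMatchings B A D :=
  and_comm

variable [DecidableEq V] {v : V} {t : ℕ}

theorem HasGuardMatchings.exists_move (hG : G.IsBipartiteWith A B)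
    (h : G.HasGuardMatchings A B D) (hvA : v ∈ A) (hvD : v ∉ D) :
    ∃ u ∈ D, G.Adj u v ∧ G.HasGuardMatchings A B (insert v (D.erase u)) := by
  obtain ⟨hA, hB⟩ := h
  obtain ⟨u, ⟨huD, huB⟩, hvu, hA'⟩ := hA.exists_adj_diff_singleton ⟨hvA, hvD⟩
  have hvB : v ∉ B := Set.disjoint_left.1 hG.disjoint hvA
  have huA : u ∉ A := Set.disjoint_right.1 hG.disjoint huB
  refine ⟨u, huD, hvu.symm, ?_, ?_⟩
  · rwa [Finset.sdiff_coe_insert_erase_of_notMem huA,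
      Finset.coe_insert_erase_inter_of_notMem hvB]
  · refine (hB.insert (fun h => h.2 huD) (fun h => hvD h.1) hvu.symm).mono ?_ ?_
    · intro x
      simp only [Finset.coe_insert, Finset.coe_erase, Set.mem_insert_iff, Set.mem_sdiff,
        Finset.mem_coe, Set.mem_singleton_iff]
      grind
    · intro x
      simp only [Finset.coe_insert, Finset.coe_erase, Set.mem_inter_iff, Set.mem_insert_iff,
        Set.mem_sdiff, Finset.mem_coe, Set.mem_singleton_iff]
      grind

theorem HasGuardMatchings.not_attackerWinsIn (hG : G.IsBipartiteWith A B)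
    (hcover : ∀ v, v ∈ A ∨ v ∈ B) (h : G.HasGuardMatchings A B D) :
    ¬ AttackerWinsIn G t D := by
  induction t generalizing D with
  | zero => exact id
  | succ t ih =>
    rintro ⟨v, hvD, hwin⟩
    obtain ⟨u, huD, huv, h'⟩ :
        ∃ u ∈ D, G.Adj u v ∧ G.HasGuardMatchings A B (insert v (D.erase u)) := by
      rcases hcover v with hvA | hvB
      · exact h.exists_move hG hvA hvD
      · simpa only [hasGuardMatchings_comm (A := B)]
          using (hasGuardMatchings_comm.1 h).exists_move hG.symm hvB hvD
    exact ih h' (hwin u huD huv)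

theorem attackerWinsIn_of_not_hasMatchingInto (hG : G.IsBipartiteWith A B) (n : ℕ)
    {D : Finset V} (hn : (↑D ∩ B : Set V).ncard = n)
    (hD : ¬ G.HasMatchingInto (A \ ↑D) (↑D ∩ B)) :
    AttackerWinsIn G (n + 1) D := by
  obtain ⟨v, hvA, hvD⟩ : (A \ ↑D).Nonempty :=
    Set.nonempty_iff_ne_empty.2 fun h => hD (h ▸ hasMatchingInto_empty _)
  refine ⟨v, hvD, fun u huD huv => ?_⟩
  have huB : u ∈ B := hG.mem_of_mem_adj hvA huv.symm
  have hu : u ∈ (↑D ∩ B : Set V) := ⟨huD, huB⟩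
  cases n with
  | zero => exact absurd hn (Set.ncard_ne_zero_of_mem hu (D.finite_toSet.inter_of_left B))
  | succ n =>
    have hvB : v ∉ B := Set.disjoint_left.1 hG.disjoint hvA
    have huA : u ∉ A := Set.disjoint_right.1 hG.disjoint huB
    refine attackerWinsIn_of_not_hasMatchingInto hG n ?_ fun h => hD ?_
    · rw [Finset.coe_insert_erase_inter_of_notMem hvB, Set.ncard_sdiff_singleton_of_mem hu, hn]
      rfl
    -- A matching after the move extends by `v ↦ u` to one before it.
    · rw [Finset.sdiff_coe_insert_erase_of_notMem huA,
        Finset.coe_insert_erase_inter_of_notMem hvB] at h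
      have h' := h.insert (by simp) (by simp) huv.symm
      rwa [Set.insert_sdiff_self_of_mem (show v ∈ A \ ↑D from ⟨hvA, hvD⟩),
        Set.insert_sdiff_self_of_mem hu] at h'

end SimpleGraph

section

variable {V : Type*} [DecidableEq V] {G : SimpleGraph V} {A B : Set V} {D : Finset V}
  {t : ℕ}

theorem gameValue_le_of_attackerWinsIn (h : AttackerWinsIn G t D) : gameValue G D ≤ t :=
  sInf_le ⟨t, rfl, h⟩

theorem exists_attackerWinsIn_of_gameValue_ne_top (h : gameValue G D ≠ ⊤) :
    ∃ t, AttackerWinsIn G t D := by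
  by_contra! hno
  exact h (sInf_eq_top.2 fun _ ⟨t, _, ht⟩ => (hno t ht).elim)

theorem gameValue_le_card_add_one (hG : G.IsBipartiteWith A B)
    (hD : ¬ G.HasMatchingInto (A \ ↑D) (↑D ∩ B)) : gameValue G D ≤ D.card + 1 := by
  refine (gameValue_le_of_attackerWinsIn
    (SimpleGraph.attackerWinsIn_of_not_hasMatchingInto hG _ rfl hD)).trans ?_
  have hcard : (↑D ∩ B : Set V).ncard ≤ D.card :=
    (Set.ncard_le_ncard Set.inter_subset_left D.finite_toSet).trans_eq (Set.ncard_coe_finset D)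
  exact_mod_cast Nat.succ_le_succ hcard

end

/-- If `G` is a bipartite graph and `D` a set of `g` guards with `t_G(D) < +∞`,
then `t_G(D) ≤ g + 1`. -/
theorem stmt3 {V : Type*} [DecidableEq V] (G : SimpleGraph V) (A B : Set V)
    (hpart : ∀ v, v ∈ A ↔ v ∉ B)
    (hbip : ∀ u v, G.Adj u v → (u ∈ A ∧ v ∈ B) ∨ (u ∈ B ∧ v ∈ A))
    (D : Finset V) (g : ℕ) (hg : D.card = g)
    (hfin : gameValue G D ≠ ⊤) :
    gameValue G D ≤ (g : ℕ∞) + 1 := by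
  have hG : G.IsBipartiteWith A B :=
    ⟨Set.disjoint_left.2 fun v => (hpart v).1, fun u v => hbip u v⟩
  have hcover : ∀ v, v ∈ A ∨ v ∈ B := fun v => (em (v ∈ B)).symm.imp_left (hpart v).2
  obtain ⟨t, ht⟩ := exists_attackerWinsIn_of_gameValue_ne_top hfin
  have hD : ¬ G.HasGuardMatchings A B D := fun h => h.not_attackerWinsIn hG hcover ht
  subst hg
  rcases not_and_or.1 hD with hA | hB
  · exact gameValue_le_card_add_one hG hA
  · exact gameValue_le_card_add_one hG.symm hB
end

section
/- Let G be a bipartite graph with bipartition (A, B) and set of guards D = B. If there exists a set S ⊆ A with |N(S)| < |S| (where N(S) is the set of vertices with a neighbor in S), then Attacker wins in at most |N(S)| + 1 turns, i.e., t_G(D) ≤ |N(S)| + 1. -/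
lemma attacker_aux {V : Type*} [Fintype V] [DecidableEq V] (G : SimpleGraph V)
    [DecidableRel G.Adj] (A B : Finset V)
    (hpart : ∀ v, v ∈ A ↔ v ∉ B)
    (hbip : ∀ u v, G.Adj u v → (u ∈ A ∧ v ∈ B) ∨ (u ∈ B ∧ v ∈ A))
    (S : Finset V) (hS : S ⊆ A) :
    ∀ (m : ℕ) (D : Finset V),
      (D ∩ S.biUnion fun s => G.neighborFinset s).card ≤ m →
      (D ∩ S).card + m < S.card →
      AttackerWinsIn G (m + 1) D := by
  have hSNS : ∀ v ∈ S, v ∉ (S.biUnion fun s => G.neighborFinset s) := by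
    intro v hv hmem
    obtain ⟨s, hs, hadj⟩ := Finset.mem_biUnion.mp hmem
    rw [SimpleGraph.mem_neighborFinset] at hadj
    rcases hbip s v hadj with ⟨_, h2⟩ | ⟨h1, _⟩
    · exact (hpart v).mp (hS hv) h2
    · exact (hpart s).mp (hS hs) h1
  intro m
  induction m with
  | zero =>
    intro D hNS hcard
    obtain ⟨v, hvS, hvD⟩ : ∃ v ∈ S, v ∉ D := by
      by_contra h
      push_neg at h
      have : S ⊆ D ∩ S := fun x hx => Finset.mem_inter.mpr ⟨h x hx, hx⟩
      have := Finset.card_le_card this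
      omega
    refine ⟨v, hvD, fun u hu hadj => ?_⟩
    exfalso
    have hu' : u ∈ D ∩ S.biUnion fun s => G.neighborFinset s := by
      refine Finset.mem_inter.mpr ⟨hu, Finset.mem_biUnion.mpr ⟨v, hvS, ?_⟩⟩
      rw [SimpleGraph.mem_neighborFinset]
      exact hadj.symm
    have := Finset.card_pos.mpr ⟨u, hu'⟩
    omega
  | succ m ih =>
    intro D hNS hcard
    obtain ⟨v, hvS, hvD⟩ : ∃ v ∈ S, v ∉ D := by
      by_contra h
      push_neg at h
      have : S ⊆ D ∩ S := fun x hx => Finset.mem_inter.mpr ⟨h x hx, hx⟩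
      have := Finset.card_le_card this
      omega
    refine ⟨v, hvD, fun u hu hadj => ?_⟩
    set NS := S.biUnion fun s => G.neighborFinset s with hNSdef
    have huNS : u ∈ NS := by
      refine Finset.mem_biUnion.mpr ⟨v, hvS, ?_⟩
      rw [SimpleGraph.mem_neighborFinset]
      exact hadj.symm
    apply ih
    · -- (insert v (D.erase u) ∩ NS).card ≤ m
      have hsub : insert v (D.erase u) ∩ NS ⊆ (D ∩ NS).erase u := by
        intro x hx
        obtain ⟨hx1, hx2⟩ := Finset.mem_inter.mp hx
        rcases Finset.mem_insert.mp hx1 with rfl | hx1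
        · exact absurd hx2 (hSNS x hvS)
        · obtain ⟨hxu, hxD⟩ := Finset.mem_erase.mp hx1
          exact Finset.mem_erase.mpr ⟨hxu, Finset.mem_inter.mpr ⟨hxD, hx2⟩⟩
      have h1 := Finset.card_le_card hsub
      have h2 : ((D ∩ NS).erase u).card = (D ∩ NS).card - 1 :=
        Finset.card_erase_of_mem (Finset.mem_inter.mpr ⟨hu, huNS⟩)
      have h3 : 0 < (D ∩ NS).card :=
        Finset.card_pos.mpr ⟨u, Finset.mem_inter.mpr ⟨hu, huNS⟩⟩
      omega
    · -- (insert v (D.erase u) ∩ S).card + m < S.card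
      have hsub : insert v (D.erase u) ∩ S ⊆ insert v (D ∩ S) := by
        intro x hx
        obtain ⟨hx1, hx2⟩ := Finset.mem_inter.mp hx
        rcases Finset.mem_insert.mp hx1 with rfl | hx1
        · exact Finset.mem_insert_self _ _
        · exact Finset.mem_insert_of_mem
            (Finset.mem_inter.mpr ⟨(Finset.mem_erase.mp hx1).2, hx2⟩)
      have h1 := Finset.card_le_card hsub
      have h2 := Finset.card_insert_le v (D ∩ S)
      omega

/-- Let `G` be bipartite with bipartition `(A, B)` and guard set `D = B`.
If `S ⊆ A` satisfies `|N(S)| < |S|`, then Attacker wins in at most `|N(S)| + 1`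
turns, i.e. `t_G(B) ≤ |N(S)| + 1`. -/
theorem stmt4 {V : Type*} [Fintype V] [DecidableEq V] (G : SimpleGraph V)
    [DecidableRel G.Adj] (A B : Finset V)
    (hpart : ∀ v, v ∈ A ↔ v ∉ B)
    (hbip : ∀ u v, G.Adj u v → (u ∈ A ∧ v ∈ B) ∨ (u ∈ B ∧ v ∈ A))
    (S : Finset V) (hS : S ⊆ A)
    (hHall : (S.biUnion fun s => G.neighborFinset s).card < S.card) :
    gameValue G B ≤ ((S.biUnion fun s => G.neighborFinset s).card : ℕ∞) + 1 := by
  set NS := S.biUnion fun s => G.neighborFinset s with hNSdef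
  have hwin : AttackerWinsIn G (NS.card + 1) B := by
    apply attacker_aux G A B hpart hbip S hS
    · exact Finset.card_le_card (Finset.inter_subset_right)
    · have : B ∩ S = ∅ := by
        rw [Finset.eq_empty_iff_forall_notMem]
        intro x hx
        obtain ⟨hxB, hxS⟩ := Finset.mem_inter.mp hx
        exact (hpart x).mp (hS hxS) hxB
      rw [this]
      simpa using hHall
  have : ((NS.card : ℕ∞) + 1) ∈
      {n : ℕ∞ | ∃ t : ℕ, n = (t : ℕ∞) ∧ AttackerWinsIn G t B} := by
    exact ⟨NS.card + 1, by push_cast; ring, hwin⟩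
  exact sInf_le this
end

section
/- Let G be a graph with vertex set {1, …, n} and let k ≥ 1. Construct a bipartite graph G' and guard set D as follows: take vertices U = {u_1, …, u_k} and V = {v_1, …, v_n} with all edges between U and V; for each edge e = ij of G take new disjoint sets S_e of k+1 vertices and T_e of k vertices with all edges between S_e and T_e, and join every vertex of S_e to v_i and to v_j; let D consist of V together with all sets T_e. Then G has no independent set of size k if and only if t_{G'}(D) ≤ 2k + 1. -/
/-- Vertices of the construction: `U = Fin k`, `V = Fin n`, and for every edge `e`
of `G` a set `S_e` of `k+1` vertices and a set `T_e` of `k` vertices. -/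
abbrev ConsV {n : ℕ} (G : SimpleGraph (Fin n)) [DecidableRel G.Adj] (k : ℕ) :=
  (Fin k ⊕ Fin n) ⊕ (↥G.edgeFinset × (Fin (k + 1) ⊕ Fin k))

/-- Base relation of the construction: all edges between `U` and `V`; all edges
between `S_e` and `T_e`; and each vertex of `S_e`, for `e = ij`, joined to
`v_i` and `v_j`. -/
def consRel {n : ℕ} (G : SimpleGraph (Fin n)) [DecidableRel G.Adj] (k : ℕ) :
    ConsV G k → ConsV G k → Prop
  | .inl (.inl _), .inl (.inr _) => True
  | .inr (e, .inl _), .inr (e', .inr _) => e = e'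
  | .inr (e, .inl _), .inl (.inr i) => i ∈ (e.1 : Sym2 (Fin n))
  | _, _ => False

/-- The bipartite graph `G'` of the construction. -/
def consGraph {n : ℕ} (G : SimpleGraph (Fin n)) [DecidableRel G.Adj] (k : ℕ) :
    SimpleGraph (ConsV G k) :=
  SimpleGraph.fromRel (consRel G k)

/-- Guarded vertices: `V` together with all the `T_e`'s. -/
def consGuard {n : ℕ} (G : SimpleGraph (Fin n)) [DecidableRel G.Adj] (k : ℕ) :
    ConsV G k → Bool
  | .inl (.inr _) => true
  | .inr (_, .inr _) => true
  | _ => false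

/-- The guard set `D` of the construction. -/
def consD {n : ℕ} (G : SimpleGraph (Fin n)) [DecidableRel G.Adj] (k : ℕ) :
    Finset (ConsV G k) :=
  Finset.univ.filter fun x => consGuard G k x = true

open Finset
section
variable {α β : Type*} [DecidableEq α] [Fintype β] [DecidableEq β]

lemma filt_untouched (f : β → α) (D : Finset α) {x y : α}
    (hx : ∀ i, f i ≠ x) (hy : ∀ i, f i ≠ y) :
    univ.filter (fun i => f i ∈ insert x (D.erase y)) = univ.filter (fun i => f i ∈ D) := by
  ext i; simp [Finset.mem_insert, Finset.mem_erase, hx i, hy i]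

lemma filt_gain (f : β → α) (hf : Function.Injective f) (D : Finset α) (i₀ : β) {y : α}
    (hy : ∀ i, f i ≠ y) :
    univ.filter (fun i => f i ∈ insert (f i₀) (D.erase y))
      = insert i₀ (univ.filter (fun i => f i ∈ D)) := by
  ext i; simp [Finset.mem_insert, Finset.mem_erase, hy i, hf.eq_iff]

lemma filt_lose (f : β → α) (hf : Function.Injective f) (D : Finset α) (i₀ : β) {x : α}
    (hx : ∀ i, f i ≠ x) :
    univ.filter (fun i => f i ∈ insert x (D.erase (f i₀)))
      = (univ.filter (fun i => f i ∈ D)).erase i₀ := by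
  ext i; simp [Finset.mem_insert, Finset.mem_erase, hx i, hf.eq_iff]

lemma nfilt_untouched (f : β → α) (D : Finset α) {x y : α}
    (hx : ∀ i, f i ≠ x) (hy : ∀ i, f i ≠ y) :
    univ.filter (fun i => f i ∉ insert x (D.erase y)) = univ.filter (fun i => f i ∉ D) := by
  ext i; simp [Finset.mem_insert, Finset.mem_erase, hx i, hy i]

lemma nfilt_gain (f : β → α) (hf : Function.Injective f) (D : Finset α) (i₀ : β) {x : α}
    (hx : ∀ i, f i ≠ x) :
    univ.filter (fun i => f i ∉ insert x (D.erase (f i₀)))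
      = insert i₀ (univ.filter (fun i => f i ∉ D)) := by
  ext i
  simp only [Finset.mem_insert, Finset.mem_erase, Finset.mem_filter, Finset.mem_univ,
    true_and, hx i, false_or, hf.eq_iff]
  tauto

lemma nfilt_lose (f : β → α) (hf : Function.Injective f) (D : Finset α) (i₀ : β) {y : α}
    (hy : ∀ i, f i ≠ y) :
    univ.filter (fun i => f i ∉ insert (f i₀) (D.erase y))
      = (univ.filter (fun i => f i ∉ D)).erase i₀ := by
  ext i
  simp only [Finset.mem_insert, Finset.mem_erase, Finset.mem_filter, Finset.mem_univ,
    true_and, hy i, hf.eq_iff]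
  tauto

lemma sum_update_le {F F' : β → ℕ} {e₀ : β} {c : ℕ}
    (h : ∀ e ≠ e₀, F' e = F e) (h0 : F' e₀ ≤ F e₀ + c) :
    ∑ e, F' e ≤ (∑ e, F e) + c := by
  rw [← Finset.sum_erase_add univ F' (mem_univ e₀), ← Finset.sum_erase_add univ F (mem_univ e₀)]
  have he : ∑ e ∈ univ.erase e₀, F' e = ∑ e ∈ univ.erase e₀, F e :=
    Finset.sum_congr rfl (fun e he => h e (Finset.mem_erase.1 he).1)
  omega

lemma sum_eq_update {F F' : β → ℕ} {e₀ : β}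
    (h : ∀ e ≠ e₀, F' e = F e) (h0 : F' e₀ = F e₀) :
    ∑ e, F' e = ∑ e, F e := by
  exact Finset.sum_congr rfl (fun e _ => by by_cases he : e = e₀ <;> simp_all)

end

open Finset

section Aux
set_option linter.unusedSectionVars false
variable {n : ℕ} (G : SimpleGraph (Fin n)) [DecidableRel G.Adj] (k : ℕ)

def MDvU (j : Fin k) : ConsV G k := .inl (.inl j)
def MDvV (i : Fin n) : ConsV G k := .inl (.inr i)
def MDvS (e : ↥G.edgeFinset) (a : Fin (k+1)) : ConsV G k := .inr (e, .inl a)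
def MDvT (e : ↥G.edgeFinset) (b : Fin k) : ConsV G k := .inr (e, .inr b)

variable {G k}

lemma vU_inj : Function.Injective (MDvU G k) := by
  intro a b h; simpa [MDvU] using h
lemma vV_inj : Function.Injective (MDvV G k) := by
  intro a b h; simpa [MDvV] using h
lemma vS_inj (e : ↥G.edgeFinset) : Function.Injective (MDvS G k e) := by
  intro a b h; simpa [MDvS] using h
lemma vT_inj (e : ↥G.edgeFinset) : Function.Injective (MDvT G k e) := by
  intro a b h; simpa [MDvT] using h

variable (G k)

def Acard (D : Finset (ConsV G k)) : ℕ := (univ.filter fun j : Fin k => MDvU G k j ∈ D).card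
def wSet (D : Finset (ConsV G k)) : Finset (Fin n) := univ.filter fun i => MDvV G k i ∉ D
def tC (e : ↥G.edgeFinset) (D : Finset (ConsV G k)) : ℕ :=
  (univ.filter fun b : Fin k => MDvT G k e b ∈ D).card
def sC (e : ↥G.edgeFinset) (D : Finset (ConsV G k)) : ℕ :=
  (univ.filter fun a : Fin (k+1) => MDvS G k e a ∈ D).card
def gC (e : ↥G.edgeFinset) (D : Finset (ConsV G k)) : ℕ := sC G k e D + tC G k e D

def Wfun (e : ↥G.edgeFinset) (D : Finset (ConsV G k)) : ℕ :=
  max (k - tC G k e D) (k * (gC G k e D - k))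

def Phi (I : Finset (Fin n)) (D : Finset (ConsV G k)) : ℕ :=
  (wSet G k D ∩ I).card + (wSet G k D \ I).card + ∑ e : ↥G.edgeFinset, Wfun G k e D

structure MDInv (I : Finset (Fin n)) (D : Finset (ConsV G k)) (r : ℕ) : Prop where
  hg : ∀ e, gC G k e D = k ∨ gC G k e D = k + 1
  hA : Acard G k D = (wSet G k D ∩ I).card
  hphi : ∃ f : Fin n → Option ↥G.edgeFinset,
      (∀ o ∈ wSet G k D \ I, ∃ e, f o = some e ∧ (o : Fin n) ∈ (e.1 : Sym2 (Fin n)) ∧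
        gC G k e D = k + 1) ∧
      (∀ o ∈ wSet G k D \ I, ∀ o' ∈ wSet G k D \ I, f o = f o' → o = o')
  hPhi : Phi G k I D ≤ r

variable {G k}

lemma mem_consD_vV (i : Fin n) : MDvV G k i ∈ consD G k := by
  unfold consD; rw [Finset.mem_filter]; exact ⟨Finset.mem_univ _, rfl⟩
lemma mem_consD_vT (e : ↥G.edgeFinset) (b : Fin k) : MDvT G k e b ∈ consD G k := by
  unfold consD; rw [Finset.mem_filter]; exact ⟨Finset.mem_univ _, rfl⟩
lemma not_mem_consD_vU (j : Fin k) : MDvU G k j ∉ consD G k := by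
  unfold consD; rw [Finset.mem_filter]; exact fun h => Bool.false_ne_true h.2
lemma not_mem_consD_vS (e : ↥G.edgeFinset) (a : Fin (k+1)) : MDvS G k e a ∉ consD G k := by
  unfold consD; rw [Finset.mem_filter]; exact fun h => Bool.false_ne_true h.2

lemma initial_inv (I : Finset (Fin n)) : MDInv G k I (consD G k) 0 := by
  have hw : wSet G k (consD G k) = ∅ := by
    ext i; simp [wSet, mem_consD_vV]
  have ht : ∀ e, tC G k e (consD G k) = k := by
    intro e
    rw [tC, Finset.filter_true_of_mem (fun b _ => mem_consD_vT e b)]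
    simp
  have hs : ∀ e, sC G k e (consD G k) = 0 := by
    intro e
    rw [sC, Finset.filter_false_of_mem (fun a _ => not_mem_consD_vS e a)]
    simp
  refine ⟨fun e => Or.inl (by simp [gC, ht, hs]), ?_, ⟨fun _ => none, ?_, ?_⟩, ?_⟩
  · rw [hw]
    rw [Acard, Finset.filter_false_of_mem (fun j _ => not_mem_consD_vU j)]
    simp
  · simp [hw]
  · simp [hw]
  · simp [Phi, hw, Wfun, ht, hs, gC]

section Steps
set_option linter.unusedSectionVars false
variable {n : ℕ} {G : SimpleGraph (Fin n)} [DecidableRel G.Adj] {k : ℕ}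

lemma adj_vU_vV (j : Fin k) (i : Fin n) : (consGraph G k).Adj (MDvV G k i) (MDvU G k j) := by
  rw [consGraph, SimpleGraph.fromRel_adj]
  refine ⟨by simp [MDvU, MDvV], Or.inr ?_⟩
  simp [consRel, MDvU, MDvV]

lemma step_vU {I : Finset (Fin n)} {D : Finset (ConsV G k)} {r : ℕ} {u : Fin k}
    (hIc : I.card = k) (hv : MDvU G k u ∉ D) (hinv : MDInv G k I D r) :
    ∃ y ∈ D, (consGraph G k).Adj y (MDvU G k u) ∧
      MDInv G k I (insert (MDvU G k u) (D.erase y)) (r + 1) := by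
  obtain ⟨hg, hA, ⟨f, hf1, hf2⟩, hPhi⟩ := hinv
  -- Acard D < k
  have hAlt : Acard G k D < k := by
    rw [Acard]
    have hsub : univ.filter (fun j : Fin k => MDvU G k j ∈ D) ⊆ univ.erase u := by
      intro j hj
      rcases Finset.mem_filter.1 hj with ⟨-, hj⟩
      exact Finset.mem_erase.2 ⟨fun h => hv (h ▸ hj), Finset.mem_univ j⟩
    have := Finset.card_le_card hsub
    rw [Finset.card_erase_of_mem (Finset.mem_univ u), Finset.card_univ, Fintype.card_fin] at this
    have hk1 : 1 ≤ k := Nat.pos_of_ne_zero (by rintro rfl; exact absurd u.2 (by omega))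
    omega
  -- find i ∈ I with v_i guarded
  have hnotsub : ¬ I ⊆ wSet G k D := by
    intro hsub
    have : wSet G k D ∩ I = I := Finset.inter_eq_right.2 hsub
    rw [hA, this, hIc] at hAlt
    omega
  obtain ⟨i, hiI, hiw⟩ := Finset.not_subset.1 hnotsub
  have hiD : MDvV G k i ∈ D := by
    by_contra h
    exact hiw (Finset.mem_filter.2 ⟨Finset.mem_univ i, h⟩)
  refine ⟨MDvV G k i, hiD, (adj_vU_vV u i), ?_⟩
  set D' := insert (MDvU G k u) (D.erase (MDvV G k i)) with hD'
  have hAcard' : Acard G k D' = Acard G k D + 1 := by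
    rw [Acard, hD', filt_gain (MDvU G k) vU_inj D u (by simp [MDvU, MDvV]),
      Finset.card_insert_of_notMem (by simp [hv]), Acard]
  have hwSet' : wSet G k D' = insert i (wSet G k D) := by
    rw [wSet, hD', nfilt_gain (MDvV G k) vV_inj D i (by simp [MDvU, MDvV]), wSet]
  have htC' : ∀ e, tC G k e D' = tC G k e D := by
    intro e
    rw [tC, hD', filt_untouched (MDvT G k e) D (by simp [MDvT, MDvU]) (by simp [MDvT, MDvV]), tC]
  have hsC' : ∀ e, sC G k e D' = sC G k e D := by
    intro e
    rw [sC, hD', filt_untouched (MDvS G k e) D (by simp [MDvS, MDvU]) (by simp [MDvS, MDvV]), sC]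
  have hgC' : ∀ e, gC G k e D' = gC G k e D := fun e => by rw [gC, htC', hsC', gC]
  have hiw' : i ∉ wSet G k D := hiw
  have hwI' : wSet G k D' ∩ I = insert i (wSet G k D ∩ I) := by
    rw [hwSet', Finset.insert_inter_of_mem hiI]
  have hwO' : wSet G k D' \ I = wSet G k D \ I := by
    rw [hwSet', Finset.insert_sdiff_of_mem _ hiI]
  refine ⟨fun e => hgC' e ▸ hg e, ?_, ⟨f, ?_, ?_⟩, ?_⟩
  · rw [hAcard', hA, hwI', Finset.card_insert_of_notMem (fun h => hiw (Finset.mem_inter.1 h).1)]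
  · intro o ho
    obtain ⟨e, he1, he2, he3⟩ := hf1 o (hwO' ▸ ho)
    exact ⟨e, he1, he2, (hgC' e) ▸ he3⟩
  · intro o ho o' ho'
    exact hf2 o (hwO' ▸ ho) o' (hwO' ▸ ho')
  · have hW : ∀ e, Wfun G k e D' = Wfun G k e D := fun e => by rw [Wfun, htC', hgC', Wfun]
    have hsum : ∑ e : ↥G.edgeFinset, Wfun G k e D' = ∑ e : ↥G.edgeFinset, Wfun G k e D :=
      Finset.sum_congr rfl (fun e _ => hW e)
    rw [Phi, hsum, hwI', hwO',
      Finset.card_insert_of_notMem (fun h => hiw (Finset.mem_inter.1 h).1)]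
    rw [Phi] at hPhi
    omega

end Steps

section Steps2
set_option linter.unusedSectionVars false
variable {n : ℕ} {G : SimpleGraph (Fin n)} [DecidableRel G.Adj] {k : ℕ}

lemma adj_vV_vS' {e : ↥G.edgeFinset} {i : Fin n} (hi : i ∈ (e.1 : Sym2 (Fin n)))
    (a : Fin (k+1)) : (consGraph G k).Adj (MDvV G k i) (MDvS G k e a) := by
  rw [consGraph, SimpleGraph.fromRel_adj]
  exact ⟨by simp [MDvV, MDvS], Or.inr (by simpa [consRel, MDvV, MDvS] using hi)⟩

lemma tC_le (e : ↥G.edgeFinset) (D : Finset (ConsV G k)) : tC G k e D ≤ k := by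
  rw [tC]
  have := Finset.card_filter_le (univ : Finset (Fin k)) (fun b => MDvT G k e b ∈ D)
  simpa using this

lemma erase_sdiff_of_mem {I s : Finset (Fin n)} {i : Fin n} (hiI : i ∈ I) :
    (s.erase i) \ I = s \ I := by
  ext x
  simp only [Finset.mem_erase, Finset.mem_sdiff]
  constructor
  · rintro ⟨⟨-, h⟩, h2⟩; exact ⟨h, h2⟩
  · rintro ⟨h, h2⟩; exact ⟨⟨fun he => h2 (he ▸ hiI), h⟩, h2⟩

lemma step_vV {I : Finset (Fin n)} {D : Finset (ConsV G k)} {r : ℕ} {i : Fin n}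
    (hv : MDvV G k i ∉ D) (hinv : MDInv G k I D r) :
    ∃ y ∈ D, (consGraph G k).Adj y (MDvV G k i) ∧
      MDInv G k I (insert (MDvV G k i) (D.erase y)) (r + 1) := by
  obtain ⟨hg, hA, ⟨f, hf1, hf2⟩, hPhi⟩ := hinv
  have hiw : i ∈ wSet G k D := Finset.mem_filter.2 ⟨Finset.mem_univ i, hv⟩
  by_cases hiI : i ∈ I
  · -- respond from a guard on U
    have hApos : 0 < Acard G k D := by
      rw [hA]
      exact Finset.card_pos.2 ⟨i, Finset.mem_inter.2 ⟨hiw, hiI⟩⟩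
    obtain ⟨j, hj⟩ := Finset.card_pos.1 hApos
    have hjD : MDvU G k j ∈ D := (Finset.mem_filter.1 hj).2
    refine ⟨MDvU G k j, hjD, (adj_vU_vV j i).symm, ?_⟩
    set D' := insert (MDvV G k i) (D.erase (MDvU G k j)) with hD'
    have hAcard' : Acard G k D' = Acard G k D - 1 := by
      rw [Acard, hD', filt_lose (MDvU G k) vU_inj D j (by simp [MDvU, MDvV]),
        Finset.card_erase_of_mem hj, Acard]
    have hwSet' : wSet G k D' = (wSet G k D).erase i := by
      rw [wSet, hD', nfilt_lose (MDvV G k) vV_inj D i (by simp [MDvU, MDvV]), wSet]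
    have htC' : ∀ e, tC G k e D' = tC G k e D := by
      intro e
      rw [tC, hD', filt_untouched (MDvT G k e) D (by simp [MDvT, MDvV]) (by simp [MDvT, MDvU]), tC]
    have hsC' : ∀ e, sC G k e D' = sC G k e D := by
      intro e
      rw [sC, hD', filt_untouched (MDvS G k e) D (by simp [MDvS, MDvV]) (by simp [MDvS, MDvU]), sC]
    have hgC' : ∀ e, gC G k e D' = gC G k e D := fun e => by rw [gC, htC', hsC', gC]
    have hwI' : wSet G k D' ∩ I = (wSet G k D ∩ I).erase i := by
      rw [hwSet', Finset.erase_inter]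
    have hwO' : wSet G k D' \ I = wSet G k D \ I := by
      rw [hwSet', erase_sdiff_of_mem hiI]
    have hiwI : i ∈ wSet G k D ∩ I := Finset.mem_inter.2 ⟨hiw, hiI⟩
    refine ⟨fun e => hgC' e ▸ hg e, ?_, ⟨f, ?_, ?_⟩, ?_⟩
    · rw [hAcard', hA, hwI', Finset.card_erase_of_mem hiwI]
    · intro o ho
      obtain ⟨e, he1, he2, he3⟩ := hf1 o (hwO' ▸ ho)
      exact ⟨e, he1, he2, (hgC' e) ▸ he3⟩
    · intro o ho o' ho'
      exact hf2 o (hwO' ▸ ho) o' (hwO' ▸ ho')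
    · have hsum : ∑ e : ↥G.edgeFinset, Wfun G k e D' = ∑ e : ↥G.edgeFinset, Wfun G k e D :=
        Finset.sum_congr rfl (fun e _ => by rw [Wfun, htC', hgC', Wfun])
      rw [Phi, hsum, hwI', hwO', Finset.card_erase_of_mem hiwI]
      rw [Phi] at hPhi
      omega
  · -- respond from the gadget holding i's debt
    have hiwO : i ∈ wSet G k D \ I := Finset.mem_sdiff.2 ⟨hiw, hiI⟩
    obtain ⟨e, hfe, hie, hge⟩ := hf1 i hiwO
    have hsCpos : 0 < sC G k e D := by
      have := tC_le e D
      rw [gC] at hge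
      omega
    obtain ⟨a, ha⟩ := Finset.card_pos.1 hsCpos
    have haD : MDvS G k e a ∈ D := (Finset.mem_filter.1 ha).2
    refine ⟨MDvS G k e a, haD, (adj_vV_vS' hie a).symm, ?_⟩
    set D' := insert (MDvV G k i) (D.erase (MDvS G k e a)) with hD'
    have hAcard' : Acard G k D' = Acard G k D := by
      rw [Acard, hD', filt_untouched (MDvU G k) D (by simp [MDvU, MDvV]) (by simp [MDvU, MDvS]),
        Acard]
    have hwSet' : wSet G k D' = (wSet G k D).erase i := by
      rw [wSet, hD', nfilt_lose (MDvV G k) vV_inj D i (by simp [MDvV, MDvS]), wSet]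
    have hsCe' : sC G k e D' = sC G k e D - 1 := by
      rw [sC, hD', filt_lose (MDvS G k e) (vS_inj e) D a (by simp [MDvS, MDvV]),
        Finset.card_erase_of_mem ha, sC]
    have htC' : ∀ e', tC G k e' D' = tC G k e' D := by
      intro e'
      rw [tC, hD', filt_untouched (MDvT G k e') D (by simp [MDvT, MDvV]) (by simp [MDvT, MDvS]),
        tC]
    have hsC' : ∀ e' ≠ e, sC G k e' D' = sC G k e' D := by
      intro e' he'
      rw [sC, hD', filt_untouched (MDvS G k e') D (by simp [MDvS, MDvV])
        (by simp [MDvS, he']), sC]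
    have hgC' : ∀ e' ≠ e, gC G k e' D' = gC G k e' D := fun e' he' => by
      rw [gC, htC', hsC' e' he', gC]
    have hgCe' : gC G k e D' = k := by
      rw [gC] at hge
      rw [gC, hsCe', htC']
      omega
    have hwI' : wSet G k D' ∩ I = wSet G k D ∩ I := by
      rw [hwSet', Finset.erase_inter,
        Finset.erase_eq_of_notMem (fun h => hiI (Finset.mem_inter.1 h).2)]
    have hwO' : wSet G k D' \ I = (wSet G k D \ I).erase i := by
      rw [hwSet']
      ext x
      simp only [Finset.mem_erase, Finset.mem_sdiff]
      tauto
    refine ⟨?_, ?_, ⟨f, ?_, ?_⟩, ?_⟩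
    · intro e'
      by_cases he' : e' = e
      · subst he'; rw [hgCe']; exact Or.inl rfl
      · rw [hgC' e' he']; exact hg e'
    · rw [hAcard', hA, hwI']
    · intro o ho
      rw [hwO'] at ho
      obtain ⟨hoi, ho2⟩ := Finset.mem_erase.1 ho
      obtain ⟨eo, h1, h2, h3⟩ := hf1 o ho2
      have heo : eo ≠ e := by
        intro heq
        exact hoi (hf2 o ho2 i hiwO (by rw [h1, heq, hfe]))
      exact ⟨eo, h1, h2, (hgC' eo heo) ▸ h3⟩
    · intro o ho o' ho'
      rw [hwO'] at ho ho'
      exact hf2 o (Finset.mem_erase.1 ho).2 o' (Finset.mem_erase.1 ho').2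
    · have hsum : ∑ e' : ↥G.edgeFinset, Wfun G k e' D' ≤ (∑ e' : ↥G.edgeFinset, Wfun G k e' D) + 0 := by
        refine sum_update_le (e₀ := e) (fun e' he' => by rw [Wfun, htC', hgC' e' he', Wfun]) ?_
        rw [Wfun, Wfun, htC', hgCe']
        rw [gC] at hge
        have h1 : k - k = 0 := Nat.sub_self k
        rw [h1]
        simp only [Nat.mul_zero, Nat.max_zero, Nat.add_zero]
        have : sC G k e D + tC G k e D - k = 1 := by omega
        rw [gC, this]
        exact le_max_left _ _
      rw [Phi, hwI', hwO', Finset.card_erase_of_mem hiwO]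
      rw [Phi] at hPhi
      omega

end Steps2

section Steps3
set_option linter.unusedSectionVars false
variable {n : ℕ} {G : SimpleGraph (Fin n)} [DecidableRel G.Adj] {k : ℕ}

lemma adj_vT_vS' (e : ↥G.edgeFinset) (b : Fin k) (a : Fin (k+1)) :
    (consGraph G k).Adj (MDvT G k e b) (MDvS G k e a) := by
  rw [consGraph, SimpleGraph.fromRel_adj]
  exact ⟨by simp [MDvT, MDvS], Or.inr (by simp [consRel, MDvT, MDvS])⟩

lemma exists_endpoint_notI {I : Finset (Fin n)}
    (hind : ∀ a ∈ I, ∀ b ∈ I, a ≠ b → ¬ G.Adj a b) (e : ↥G.edgeFinset) :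
    ∃ o, o ∈ (e.1 : Sym2 (Fin n)) ∧ o ∉ I := by
  have hq : (e.1 : Sym2 (Fin n)) ∈ G.edgeSet := SimpleGraph.mem_edgeFinset.1 e.2
  revert hq
  induction (e.1 : Sym2 (Fin n)) using Sym2.ind with
  | _ x y =>
    intro hq
    rw [SimpleGraph.mem_edgeSet] at hq
    by_cases hx : x ∈ I
    · by_cases hy : y ∈ I
      · exact absurd hq (hind x hx y hy hq.ne)
      · exact ⟨y, by simp [Sym2.mem_iff], hy⟩
    · exact ⟨x, by simp [Sym2.mem_iff], hx⟩

lemma sC_le {e : ↥G.edgeFinset} {D : Finset (ConsV G k)} {a : Fin (k+1)}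
    (ha : MDvS G k e a ∉ D) : sC G k e D ≤ k := by
  rw [sC]
  have hsub : univ.filter (fun a' : Fin (k+1) => MDvS G k e a' ∈ D) ⊆ univ.erase a := by
    intro a' ha'
    rcases Finset.mem_filter.1 ha' with ⟨-, ha'⟩
    exact Finset.mem_erase.2 ⟨fun h => ha (h ▸ ha'), Finset.mem_univ a'⟩
  have := Finset.card_le_card hsub
  rw [Finset.card_erase_of_mem (Finset.mem_univ a), Finset.card_univ, Fintype.card_fin] at this
  omega

lemma step_vT {I : Finset (Fin n)} {D : Finset (ConsV G k)} {r : ℕ} {e : ↥G.edgeFinset}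
    {b : Fin k} (hv : MDvT G k e b ∉ D) (hinv : MDInv G k I D r) :
    ∃ y ∈ D, (consGraph G k).Adj y (MDvT G k e b) ∧
      MDInv G k I (insert (MDvT G k e b) (D.erase y)) (r + 1) := by
  obtain ⟨hg, hA, ⟨f, hf1, hf2⟩, hPhi⟩ := hinv
  have htlt : tC G k e D < k := by
    rw [tC]
    have hsub : univ.filter (fun b' : Fin k => MDvT G k e b' ∈ D) ⊆ univ.erase b := by
      intro b' hb'
      rcases Finset.mem_filter.1 hb' with ⟨-, hb'⟩
      exact Finset.mem_erase.2 ⟨fun h => hv (h ▸ hb'), Finset.mem_univ b'⟩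
    have := Finset.card_le_card hsub
    rw [Finset.card_erase_of_mem (Finset.mem_univ b), Finset.card_univ, Fintype.card_fin] at this
    have hb0 : 0 < k := b.pos
    omega
  have hsCpos : 0 < sC G k e D := by
    have := hg e
    rw [gC] at this
    omega
  obtain ⟨a, ha⟩ := Finset.card_pos.1 hsCpos
  have haD : MDvS G k e a ∈ D := (Finset.mem_filter.1 ha).2
  refine ⟨MDvS G k e a, haD, (adj_vT_vS' e b a).symm, ?_⟩
  set D' := insert (MDvT G k e b) (D.erase (MDvS G k e a)) with hD'
  have hAcard' : Acard G k D' = Acard G k D := by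
    rw [Acard, hD', filt_untouched (MDvU G k) D (by simp [MDvU, MDvT]) (by simp [MDvU, MDvS]),
      Acard]
  have hwSet' : wSet G k D' = wSet G k D := by
    rw [wSet, hD', nfilt_untouched (MDvV G k) D (by simp [MDvV, MDvT]) (by simp [MDvV, MDvS]),
      wSet]
  have htCe' : tC G k e D' = tC G k e D + 1 := by
    rw [tC, hD', filt_gain (MDvT G k e) (vT_inj e) D b (by simp [MDvT, MDvS]),
      Finset.card_insert_of_notMem (by simp [hv]), tC]
  have hsCe' : sC G k e D' = sC G k e D - 1 := by
    rw [sC, hD', filt_lose (MDvS G k e) (vS_inj e) D a (by simp [MDvS, MDvT]),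
      Finset.card_erase_of_mem ha, sC]
  have htC' : ∀ e' ≠ e, tC G k e' D' = tC G k e' D := by
    intro e' he'
    rw [tC, hD', filt_untouched (MDvT G k e') D (by simp [MDvT, he']) (by simp [MDvT, MDvS]), tC]
  have hsC' : ∀ e' ≠ e, sC G k e' D' = sC G k e' D := by
    intro e' he'
    rw [sC, hD', filt_untouched (MDvS G k e') D (by simp [MDvS, MDvT]) (by simp [MDvS, he']), sC]
  have hgC' : ∀ e'', gC G k e'' D' = gC G k e'' D := by
    intro e''
    by_cases he'' : e'' = e
    · subst he''
      rw [gC, htCe', hsCe', gC]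
      omega
    · rw [gC, htC' e'' he'', hsC' e'' he'', gC]
  refine ⟨fun e'' => hgC' e'' ▸ hg e'', hwSet' ▸ (hAcard' ▸ hA), ⟨f, ?_, ?_⟩, ?_⟩
  · intro o ho
    obtain ⟨eo, h1, h2, h3⟩ := hf1 o (hwSet' ▸ ho)
    exact ⟨eo, h1, h2, (hgC' eo) ▸ h3⟩
  · intro o ho o' ho'
    exact hf2 o (hwSet' ▸ ho) o' (hwSet' ▸ ho')
  · have hsum : ∑ e' : ↥G.edgeFinset, Wfun G k e' D' ≤ (∑ e' : ↥G.edgeFinset, Wfun G k e' D) + 0 := by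
      refine sum_update_le (e₀ := e)
        (fun e' he' => by rw [Wfun, htC' e' he', hgC', Wfun]) ?_
      rw [Wfun, Wfun, htCe', hgC']
      exact (max_le_max (Nat.sub_le_sub_left (Nat.le_succ _) k) le_rfl).trans
        (Nat.le_add_right _ 0)
    rw [Phi, hwSet']
    rw [Phi] at hPhi
    omega

end Steps3

section Steps4
set_option linter.unusedSectionVars false
variable {n : ℕ} {G : SimpleGraph (Fin n)} [DecidableRel G.Adj] {k : ℕ}

lemma step_vS {I : Finset (Fin n)} {D : Finset (ConsV G k)} {r : ℕ} {e : ↥G.edgeFinset}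
    {a : Fin (k+1)}
    (hind : ∀ a ∈ I, ∀ b ∈ I, a ≠ b → ¬ G.Adj a b)
    (hr2k : r ≤ 2 * k)
    (hv : MDvS G k e a ∉ D) (hinv : MDInv G k I D r) :
    ∃ y ∈ D, (consGraph G k).Adj y (MDvS G k e a) ∧
      MDInv G k I (insert (MDvS G k e a) (D.erase y)) (r + 1) := by
  obtain ⟨hg, hA, ⟨f, hf1, hf2⟩, hPhi⟩ := hinv
  by_cases htpos : 0 < tC G k e D
  · -- respond from inside T_e
    obtain ⟨b, hb⟩ := Finset.card_pos.1 htpos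
    have hbD : MDvT G k e b ∈ D := (Finset.mem_filter.1 hb).2
    refine ⟨MDvT G k e b, hbD, adj_vT_vS' e b a, ?_⟩
    set D' := insert (MDvS G k e a) (D.erase (MDvT G k e b)) with hD'
    have hAcard' : Acard G k D' = Acard G k D := by
      rw [Acard, hD', filt_untouched (MDvU G k) D (by simp [MDvU, MDvS]) (by simp [MDvU, MDvT]),
        Acard]
    have hwSet' : wSet G k D' = wSet G k D := by
      rw [wSet, hD', nfilt_untouched (MDvV G k) D (by simp [MDvV, MDvS]) (by simp [MDvV, MDvT]),
        wSet]
    have hsCe' : sC G k e D' = sC G k e D + 1 := by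
      rw [sC, hD', filt_gain (MDvS G k e) (vS_inj e) D a (by simp [MDvS, MDvT]),
        Finset.card_insert_of_notMem (by simp [hv]), sC]
    have htCe' : tC G k e D' = tC G k e D - 1 := by
      rw [tC, hD', filt_lose (MDvT G k e) (vT_inj e) D b (by simp [MDvT, MDvS]),
        Finset.card_erase_of_mem hb, tC]
    have htC' : ∀ e' ≠ e, tC G k e' D' = tC G k e' D := by
      intro e' he'
      rw [tC, hD', filt_untouched (MDvT G k e') D (by simp [MDvT, MDvS]) (by simp [MDvT, he']),
        tC]
    have hsC' : ∀ e' ≠ e, sC G k e' D' = sC G k e' D := by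
      intro e' he'
      rw [sC, hD', filt_untouched (MDvS G k e') D (by simp [MDvS, he']) (by simp [MDvS, MDvT]),
        sC]
    have hgC' : ∀ e'', gC G k e'' D' = gC G k e'' D := by
      intro e''
      by_cases he'' : e'' = e
      · subst he''
        rw [gC, htCe', hsCe', gC]
        omega
      · rw [gC, htC' e'' he'', hsC' e'' he'', gC]
    refine ⟨fun e'' => hgC' e'' ▸ hg e'', hwSet' ▸ (hAcard' ▸ hA), ⟨f, ?_, ?_⟩, ?_⟩
    · intro o ho
      obtain ⟨eo, h1, h2, h3⟩ := hf1 o (hwSet' ▸ ho)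
      exact ⟨eo, h1, h2, (hgC' eo) ▸ h3⟩
    · intro o ho o' ho'
      exact hf2 o (hwSet' ▸ ho) o' (hwSet' ▸ ho')
    · have hsum : ∑ e' : ↥G.edgeFinset, Wfun G k e' D'
          ≤ (∑ e' : ↥G.edgeFinset, Wfun G k e' D) + 1 := by
        refine sum_update_le (e₀ := e)
          (fun e' he' => by rw [Wfun, htC' e' he', hgC', Wfun]) ?_
        rw [Wfun, Wfun, htCe', hgC']
        refine max_le ?_ ((le_max_right _ _).trans (Nat.le_succ _))
        calc k - (tC G k e D - 1) ≤ (k - tC G k e D) + 1 := by omega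
          _ ≤ _ + 1 := Nat.add_le_add_right (le_max_left _ _) 1
      rw [Phi, hwSet']
      rw [Phi] at hPhi
      omega
  · -- T_e is empty: fall back to a guarded endpoint outside I
    have htC0 : tC G k e D = 0 := by omega
    have hgCek : gC G k e D = k := by
      rcases hg e with h | h
      · exact h
      · exfalso
        have := sC_le hv
        rw [gC, htC0] at h
        omega
    obtain ⟨o, hoe, hoI⟩ := exists_endpoint_notI hind e
    have hoD : MDvV G k o ∈ D := by
      by_contra hoD
      have hoW : o ∈ wSet G k D \ I :=
        Finset.mem_sdiff.2 ⟨Finset.mem_filter.2 ⟨Finset.mem_univ o, hoD⟩, hoI⟩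
      obtain ⟨e', hfe', -, hge'⟩ := hf1 o hoW
      have hne : e ≠ e' := fun h => by rw [← h, hgCek] at hge'; omega
      have hWe : Wfun G k e D = k := by
        rw [Wfun, htC0, hgCek]
        simp
      have hWe' : k ≤ Wfun G k e' D := by
        rw [Wfun]
        have : k * (gC G k e' D - k) = k := by rw [hge']; simp
        rw [this] at *
        exact le_max_right _ _
      have hsum2 : Wfun G k e D + Wfun G k e' D ≤ ∑ e'' : ↥G.edgeFinset, Wfun G k e'' D := by
        have hle : ∑ x ∈ ({e, e'} : Finset ↥G.edgeFinset), Wfun G k x D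
            ≤ ∑ e'' : ↥G.edgeFinset, Wfun G k e'' D :=
          Finset.sum_le_sum_of_subset (Finset.subset_univ _)
        rwa [Finset.sum_pair hne] at hle
      have hwOpos : 0 < (wSet G k D \ I).card := Finset.card_pos.2 ⟨o, hoW⟩
      rw [Phi] at hPhi
      omega
    refine ⟨MDvV G k o, hoD, adj_vV_vS' hoe a, ?_⟩
    set D' := insert (MDvS G k e a) (D.erase (MDvV G k o)) with hD'
    have hAcard' : Acard G k D' = Acard G k D := by
      rw [Acard, hD', filt_untouched (MDvU G k) D (by simp [MDvU, MDvS]) (by simp [MDvU, MDvV]),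
        Acard]
    have hwSet' : wSet G k D' = insert o (wSet G k D) := by
      rw [wSet, hD', nfilt_gain (MDvV G k) vV_inj D o (by simp [MDvV, MDvS]), wSet]
    have how : o ∉ wSet G k D := fun h => (Finset.mem_filter.1 h).2 hoD
    have hsCe' : sC G k e D' = sC G k e D + 1 := by
      rw [sC, hD', filt_gain (MDvS G k e) (vS_inj e) D a (by simp [MDvS, MDvV]),
        Finset.card_insert_of_notMem (by simp [hv]), sC]
    have htC' : ∀ e', tC G k e' D' = tC G k e' D := by
      intro e'
      rw [tC, hD', filt_untouched (MDvT G k e') D (by simp [MDvT, MDvS]) (by simp [MDvT, MDvV]),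
        tC]
    have hsC' : ∀ e' ≠ e, sC G k e' D' = sC G k e' D := by
      intro e' he'
      rw [sC, hD', filt_untouched (MDvS G k e') D (by simp [MDvS, he']) (by simp [MDvS, MDvV]),
        sC]
    have hgCe' : gC G k e D' = k + 1 := by
      rw [gC] at hgCek
      rw [gC, hsCe', htC']
      omega
    have hgC' : ∀ e' ≠ e, gC G k e' D' = gC G k e' D := fun e' he' => by
      rw [gC, htC', hsC' e' he', gC]
    have hwI' : wSet G k D' ∩ I = wSet G k D ∩ I := by
      rw [hwSet', Finset.insert_inter_of_notMem hoI]
    have hwO' : wSet G k D' \ I = insert o (wSet G k D \ I) := by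
      rw [hwSet']
      ext x
      simp only [Finset.mem_insert, Finset.mem_sdiff]
      constructor
      · rintro ⟨hx | hx, hxI⟩
        · exact Or.inl hx
        · exact Or.inr ⟨hx, hxI⟩
      · rintro (rfl | ⟨hx, hxI⟩)
        · exact ⟨Or.inl rfl, hoI⟩
        · exact ⟨Or.inr hx, hxI⟩
    have hoO : o ∉ wSet G k D \ I := fun h => how (Finset.mem_sdiff.1 h).1
    set f' : Fin n → Option ↥G.edgeFinset := fun o' => if o' = o then some e else f o' with hf'
    refine ⟨?_, ?_, ⟨f', ?_, ?_⟩, ?_⟩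
    · intro e'
      by_cases he' : e' = e
      · subst he'; rw [hgCe']; exact Or.inr rfl
      · rw [hgC' e' he']; exact hg e'
    · rw [hAcard', hA, hwI']
    · intro o' ho'
      rw [hwO'] at ho'
      rcases Finset.mem_insert.1 ho' with rfl | ho2
      · exact ⟨e, by rw [hf']; simp, hoe, hgCe'⟩
      · have hne : o' ≠ o := fun h => hoO (h ▸ ho2)
        obtain ⟨eo, h1, h2, h3⟩ := hf1 o' ho2
        have heo : eo ≠ e := fun h => by rw [h, hgCek] at h3; omega
        exact ⟨eo, by rw [hf']; simp [hne, h1], h2, (hgC' eo heo) ▸ h3⟩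
    · intro o1 ho1 o2 ho2 hf12
      rw [hwO'] at ho1 ho2
      rcases Finset.mem_insert.1 ho1 with rfl | ho1'
      · rcases Finset.mem_insert.1 ho2 with rfl | ho2'
        · rfl
        · exfalso
          have h2ne : o2 ≠ o1 := fun h => hoO (h ▸ ho2')
          obtain ⟨eo, h1, -, h3⟩ := hf1 o2 ho2'
          rw [hf'] at hf12
          simp [h2ne] at hf12
          rw [h1] at hf12
          have : eo = e := by injection hf12.symm
          rw [this, hgCek] at h3
          omega
      · rcases Finset.mem_insert.1 ho2 with rfl | ho2'
        · exfalso
          have h1ne : o1 ≠ o2 := fun h => hoO (h ▸ ho1')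
          obtain ⟨eo, h1, -, h3⟩ := hf1 o1 ho1'
          rw [hf'] at hf12
          simp [h1ne] at hf12
          rw [h1] at hf12
          have : eo = e := by injection hf12
          rw [this, hgCek] at h3
          omega
        · have h1ne : o1 ≠ o := fun h => hoO (h ▸ ho1')
          have h2ne : o2 ≠ o := fun h => hoO (h ▸ ho2')
          rw [hf'] at hf12
          simp [h1ne, h2ne] at hf12
          exact hf2 o1 ho1' o2 ho2' hf12
    · have hWe : Wfun G k e D' = Wfun G k e D := by
        rw [Wfun, Wfun, htC', htC0, hgCe', hgCek]
        simp
      have hsum : ∑ e' : ↥G.edgeFinset, Wfun G k e' D' = ∑ e' : ↥G.edgeFinset, Wfun G k e' D := by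
        refine Finset.sum_congr rfl (fun e' _ => ?_)
        by_cases he' : e' = e
        · subst he'; exact hWe
        · rw [Wfun, htC', hgC' e' he', Wfun]
      rw [Phi, hsum, hwI', hwO', Finset.card_insert_of_notMem hoO]
      rw [Phi] at hPhi
      omega

end Steps4

section Final
set_option linter.unusedSectionVars false
variable {n : ℕ} {G : SimpleGraph (Fin n)} [DecidableRel G.Adj] {k : ℕ}

lemma winsMono {V : Type*} [DecidableEq V] (G : SimpleGraph V) :
    ∀ t D, AttackerWinsIn G t D → AttackerWinsIn G (t+1) D := by
  intro t
  induction t with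
  | zero => intro D h; simp [AttackerWinsIn] at h
  | succ t ih =>
    rintro D ⟨v, hv, h⟩
    exact ⟨v, hv, fun u hu ha => ih _ (h u hu ha)⟩

lemma winsMono' {V : Type*} [DecidableEq V] (G : SimpleGraph V) {t t' : ℕ}
    (h : t ≤ t') (D : Finset V) (hw : AttackerWinsIn G t D) : AttackerWinsIn G t' D := by
  induction t', h using Nat.le_induction with
  | base => exact hw
  | succ t' h ih => exact winsMono G t' D ih

lemma survive {I : Finset (Fin n)} (hIc : I.card = k)
    (hind : ∀ a ∈ I, ∀ b ∈ I, a ≠ b → ¬ G.Adj a b) :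
    ∀ t r (D : Finset (ConsV G k)), MDInv G k I D r → r + t ≤ 2 * k + 1 →
      ¬ AttackerWinsIn (consGraph G k) t D := by
  intro t
  induction t with
  | zero => intro r D _ _ h; simp [AttackerWinsIn] at h
  | succ t ih =>
    rintro r D hinv hbud ⟨v, hv, hresp⟩
    rcases v with (u | i) | ⟨e, (a | b)⟩
    · obtain ⟨y, hyD, hadj, hinv'⟩ := step_vU (u := u) hIc hv hinv
      exact ih (r+1) _ hinv' (by omega) (hresp y hyD hadj)
    · obtain ⟨y, hyD, hadj, hinv'⟩ := step_vV (i := i) hv hinv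
      exact ih (r+1) _ hinv' (by omega) (hresp y hyD hadj)
    · obtain ⟨y, hyD, hadj, hinv'⟩ := step_vS (e := e) (a := a) hind (by omega) hv hinv
      exact ih (r+1) _ hinv' (by omega) (hresp y hyD hadj)
    · obtain ⟨y, hyD, hadj, hinv'⟩ := step_vT (e := e) (b := b) hv hinv
      exact ih (r+1) _ hinv' (by omega) (hresp y hyD hadj)

lemma adj_to_vS {w : ConsV G k} {e : ↥G.edgeFinset} {a : Fin (k+1)}
    (h : (consGraph G k).Adj w (MDvS G k e a)) :
    (∃ b, w = MDvT G k e b) ∨ (∃ i, i ∈ (e.1 : Sym2 (Fin n)) ∧ w = MDvV G k i) := by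
  rw [consGraph, SimpleGraph.fromRel_adj] at h
  obtain ⟨hne, h | h⟩ := h <;>
    rcases w with (u | i) | ⟨e', (a' | b')⟩ <;>
    simp_all [consRel, MDvS, MDvT, MDvV]

lemma adj_to_vU {w : ConsV G k} {j : Fin k} (h : (consGraph G k).Adj w (MDvU G k j)) :
    ∃ i, w = MDvV G k i := by
  rw [consGraph, SimpleGraph.fromRel_adj] at h
  obtain ⟨-, h | h⟩ := h <;>
  · rcases w with (u | i) | ⟨e, (a | b)⟩ <;> simp [consRel, MDvU, MDvV] at h ⊢

lemma attackS (e : ↥G.edgeFinset) :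
    ∀ c (D : Finset (ConsV G k)),
      (∀ i ∈ (e.1 : Sym2 (Fin n)), MDvV G k i ∉ D) →
      sC G k e D + tC G k e D ≤ k → tC G k e D ≤ c →
      AttackerWinsIn (consGraph G k) (c + 1) D := by
  intro c
  induction c with
  | zero =>
    intro D hV hsum htc
    obtain ⟨a, ha⟩ : ∃ a, MDvS G k e a ∉ D := by
      by_contra h
      push_neg at h
      have : sC G k e D = k + 1 := by
        rw [sC, Finset.filter_true_of_mem (fun a _ => h a)]
        simp
      omega
    refine ⟨MDvS G k e a, ha, fun u huD hadj => ?_⟩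
    rcases adj_to_vS hadj with ⟨b, rfl⟩ | ⟨i, hi, rfl⟩
    · exfalso
      have : 0 < tC G k e D := Finset.card_pos.2 ⟨b, Finset.mem_filter.2 ⟨Finset.mem_univ b, huD⟩⟩
      omega
    · exact absurd huD (hV i hi)
  | succ c ih =>
    intro D hV hsum htc
    obtain ⟨a, ha⟩ : ∃ a, MDvS G k e a ∉ D := by
      by_contra h
      push_neg at h
      have : sC G k e D = k + 1 := by
        rw [sC, Finset.filter_true_of_mem (fun a _ => h a)]
        simp
      omega
    refine ⟨MDvS G k e a, ha, fun u huD hadj => ?_⟩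
    rcases adj_to_vS hadj with ⟨b, rfl⟩ | ⟨i, hi, rfl⟩
    · set D' := insert (MDvS G k e a) (D.erase (MDvT G k e b)) with hD'
      have hb : b ∈ univ.filter (fun b' : Fin k => MDvT G k e b' ∈ D) :=
        Finset.mem_filter.2 ⟨Finset.mem_univ b, huD⟩
      have hsCe' : sC G k e D' = sC G k e D + 1 := by
        rw [sC, hD', filt_gain (MDvS G k e) (vS_inj e) D a (by simp [MDvS, MDvT]),
          Finset.card_insert_of_notMem (by simp [ha]), sC]
      have htCe' : tC G k e D' = tC G k e D - 1 := by
        rw [tC, hD', filt_lose (MDvT G k e) (vT_inj e) D b (by simp [MDvT, MDvS]),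
          Finset.card_erase_of_mem hb, tC]
      have htpos : 0 < tC G k e D := Finset.card_pos.2 ⟨b, hb⟩
      refine ih D' (fun i hi => ?_) (by omega) (by omega)
      · simp only [hD', Finset.mem_insert, Finset.mem_erase]
        push_neg
        exact ⟨by simp [MDvV, MDvS], fun _ => hV i hi⟩
    · exact absurd huD (hV i hi)

lemma attackU (hno : ¬ ∃ I : Finset (Fin n), I.card = k ∧
      ∀ a ∈ I, ∀ b ∈ I, a ≠ b → ¬ G.Adj a b) :
    ∀ m (D : Finset (ConsV G k)),
      (∀ e b, MDvT G k e b ∈ D) →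
      (∀ e a, MDvS G k e a ∉ D) →
      m ≤ (univ.filter fun j : Fin k => MDvU G k j ∉ D).card →
      (wSet G k D).card = k - m → m ≤ k →
      AttackerWinsIn (consGraph G k) (m + k + 1) D := by
  intro m
  induction m with
  | zero =>
    intro D hT hS hU hw hmk
    push_neg at hno
    obtain ⟨x, hx, y, hy, hxy, hadj⟩ := hno (wSet G k D) (by omega)
    have he : s(x, y) ∈ G.edgeFinset := SimpleGraph.mem_edgeFinset.2 (G.mem_edgeSet.2 hadj)
    have htCk : tC G k (⟨s(x,y), he⟩ : ↥G.edgeFinset) D = k := by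
      rw [tC, Finset.filter_true_of_mem (fun b _ => hT _ b)]
      simp
    have hsC0 : sC G k (⟨s(x,y), he⟩ : ↥G.edgeFinset) D = 0 := by
      rw [sC, Finset.filter_false_of_mem (fun a _ => hS _ a)]
      simp
    have := attackS (G := G) (⟨s(x,y), he⟩ : ↥G.edgeFinset) k D ?_ (by omega) (by omega)
    · simpa using this
    · intro i hi
      rcases Sym2.mem_iff.1 hi with rfl | rfl
      · exact (Finset.mem_filter.1 hx).2
      · exact (Finset.mem_filter.1 hy).2
  | succ m ih =>
    intro D hT hS hU hw hmk
    obtain ⟨u, hu⟩ := Finset.card_pos.1 (lt_of_lt_of_le (Nat.succ_pos m) hU)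
    have huD : MDvU G k u ∉ D := (Finset.mem_filter.1 hu).2
    have : m + 1 + k + 1 = (m + k + 1) + 1 := by omega
    rw [this]
    refine ⟨MDvU G k u, huD, fun w hwD hadj => ?_⟩
    obtain ⟨i, rfl⟩ := adj_to_vU hadj
    set D' := insert (MDvU G k u) (D.erase (MDvV G k i)) with hD'
    have hiw : i ∉ wSet G k D := fun h => (Finset.mem_filter.1 h).2 hwD
    have hU' : (univ.filter fun j : Fin k => MDvU G k j ∉ D').card
        = (univ.filter fun j : Fin k => MDvU G k j ∉ D).card - 1 := by
      rw [hD', nfilt_lose (MDvU G k) vU_inj D u (by simp [MDvU, MDvV]),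
        Finset.card_erase_of_mem hu]
    have hw' : wSet G k D' = insert i (wSet G k D) := by
      rw [wSet, hD', nfilt_gain (MDvV G k) vV_inj D i (by simp [MDvV, MDvU]), wSet]
    refine ih D' (fun e b => ?_) (fun e a => ?_) (by omega) ?_ (by omega)
    · simp only [hD', Finset.mem_insert, Finset.mem_erase]
      exact Or.inr ⟨by simp [MDvT, MDvV], hT e b⟩
    · simp only [hD', Finset.mem_insert, Finset.mem_erase]
      push_neg
      exact ⟨by simp [MDvS, MDvU], fun _ => hS e a⟩
    · rw [hw', Finset.card_insert_of_notMem hiw, hw]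
      omega

end Final

/-- `G` has no independent set of size `k` iff `t_{G'}(D)` ≤ `2k + 1`. -/
theorem stmt5 {n : ℕ} (G : SimpleGraph (Fin n)) [DecidableRel G.Adj]
    (k : ℕ) (hk : 1 ≤ k) :
    (¬ ∃ I : Finset (Fin n), I.card = k ∧ ∀ a ∈ I, ∀ b ∈ I, a ≠ b → ¬ G.Adj a b)
      ↔ gameValue (consGraph G k) (consD G k) ≤ ((2 * k + 1 : ℕ) : ℕ∞) := by
  constructor
  · intro hno
    have hT : ∀ (e : ↥G.edgeFinset) (b : Fin k), MDvT G k e b ∈ consD G k := mem_consD_vT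
    have hS : ∀ (e : ↥G.edgeFinset) (a : Fin (k+1)), MDvS G k e a ∉ consD G k :=
      not_mem_consD_vS
    have hU : k ≤ (univ.filter fun j : Fin k => MDvU G k j ∉ consD G k).card := by
      rw [Finset.filter_true_of_mem (fun j _ => not_mem_consD_vU j)]
      simp
    have hw0 : (wSet G k (consD G k)).card = k - k := by
      have : wSet G k (consD G k) = ∅ := by
        ext i; simp [wSet, mem_consD_vV]
      rw [this]
      simp
    have hwin := attackU hno k (consD G k) hT hS hU hw0 le_rfl
    have hwin' : AttackerWinsIn (consGraph G k) (2 * k + 1) (consD G k) := by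
      have : k + k + 1 = 2 * k + 1 := by omega
      rwa [this] at hwin
    exact sInf_le ⟨2 * k + 1, rfl, hwin'⟩
  · rintro hle ⟨I, hIc, hind⟩
    have hns : ¬ AttackerWinsIn (consGraph G k) (2 * k + 1) (consD G k) :=
      survive hIc hind (2 * k + 1) 0 _ (initial_inv I) (by omega)
    have hge : ((2 * k + 2 : ℕ) : ℕ∞) ≤ gameValue (consGraph G k) (consD G k) := by
      refine le_sInf ?_
      rintro x ⟨t, rfl, hw⟩
      have ht : ¬ t ≤ 2 * k + 1 := fun h => hns (winsMono' _ h _ hw)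
      exact_mod_cast Nat.cast_le.2 (by omega : 2 * k + 2 ≤ t)
    have := hge.trans hle
    rw [Nat.cast_le] at this
    omega
end Aux
end

section
/- Let G be a graph with vertex set {1, …, n} and let k ≥ 1. Let G' and D be as follows: vertices U = {u_1, …, u_k} and V = {v_1, …, v_n} with all edges between U and V; for each edge e = ij of G, new disjoint sets S_e of k+1 vertices and T_e of k vertices with all edges between S_e and T_e, and every vertex of S_e joined to v_i and v_j; D consists of V together with all sets T_e. Let G'' be obtained from G' by adding a new vertex s adjacent to every vertex of V and to every vertex of every T_e, and let D' = D ∪ {s}. Then G has no independent set of size k if and only if t_{G''}(D') ≤ 2k + 1. -/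
/-- Vertices of `G''`: those of `G'` plus a new vertex `s` (encoded by `none`). -/
abbrev ConsV' {n : ℕ} (G : SimpleGraph (Fin n)) [DecidableRel G.Adj] (k : ℕ) :=
  Option (ConsV G k)

/-- Relation of `G''`: that of `G'`, plus `s` adjacent to every vertex of `V` and
to every vertex of every `T_e`. -/
def consRel' {n : ℕ} (G : SimpleGraph (Fin n)) [DecidableRel G.Adj] (k : ℕ) :
    ConsV' G k → ConsV' G k → Prop
  | none, some x => consGuard G k x = true
  | some x, some y => consRel G k x y
  | _, _ => False

/-- The graph `G''` of the construction. -/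
def consGraph' {n : ℕ} (G : SimpleGraph (Fin n)) [DecidableRel G.Adj] (k : ℕ) :
    SimpleGraph (ConsV' G k) :=
  SimpleGraph.fromRel (consRel' G k)

/-- The guard set `D' = D ∪ {s}`. -/
def consD' {n : ℕ} (G : SimpleGraph (Fin n)) [DecidableRel G.Adj] (k : ℕ) :
    Finset (ConsV' G k) :=
  insert none (Finset.univ.filter fun x : ConsV' G k =>
    ∃ y, x = some y ∧ consGuard G k y = true)

section Proofs

variable {n : ℕ} {G : SimpleGraph (Fin n)} [DecidableRel G.Adj] {k : ℕ}

lemma consAdj {x y : ConsV' G k} :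
    (consGraph' G k).Adj x y ↔ x ≠ y ∧ (consRel' G k x y ∨ consRel' G k y x) :=
  SimpleGraph.fromRel_adj _ x y

lemma adjVU (u : Fin k) (v : Fin n) :
    (consGraph' G k).Adj (some (.inl (.inr v))) (some (.inl (.inl u))) := by
  rw [consAdj]; exact ⟨by simp, by simp [consRel', consRel]⟩

lemma adjUV (u : Fin k) (w : Fin n) :
    (consGraph' G k).Adj (some (.inl (.inl u))) (some (.inl (.inr w))) := by
  rw [consAdj]; exact ⟨by simp, by simp [consRel', consRel]⟩

lemma adjSV (e : ↥G.edgeFinset) (x : Fin (k+1)) (w : Fin n)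
    (hw : w ∈ (e.1 : Sym2 (Fin n))) :
    (consGraph' G k).Adj (some (.inr (e, .inl x))) (some (.inl (.inr w))) := by
  rw [consAdj]; exact ⟨by simp, by simp [consRel', consRel, hw]⟩

lemma adjVS (e : ↥G.edgeFinset) (x : Fin (k+1)) (w : Fin n)
    (hw : w ∈ (e.1 : Sym2 (Fin n))) :
    (consGraph' G k).Adj (some (.inl (.inr w))) (some (.inr (e, .inl x))) := by
  rw [consAdj]; exact ⟨by simp, by simp [consRel', consRel, hw]⟩

lemma adjTS (e : ↥G.edgeFinset) (x : Fin (k+1)) (y : Fin k) :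
    (consGraph' G k).Adj (some (.inr (e, .inr y))) (some (.inr (e, .inl x))) := by
  rw [consAdj]; exact ⟨by simp, by simp [consRel', consRel]⟩

lemma adjST (e : ↥G.edgeFinset) (x : Fin (k+1)) (y : Fin k) :
    (consGraph' G k).Adj (some (.inr (e, .inl x))) (some (.inr (e, .inr y))) := by
  rw [consAdj]; exact ⟨by simp, by simp [consRel', consRel]⟩

/-- Any guarded neighbour of an attacked `U`-vertex is a `V`-vertex. -/
lemma nbhdU {g : ConsV' G k} (u : Fin k)
    (h : (consGraph' G k).Adj g (some (.inl (.inl u)))) :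
    ∃ w : Fin n, g = some (.inl (.inr w)) := by
  rw [consAdj] at h
  rcases g with _ | (u' | w) | ⟨e, x | y⟩
  · simp [consRel', consGuard] at h
  · simp [consRel', consRel] at h
  · exact ⟨_, rfl⟩
  · simp [consRel', consRel] at h
  · simp [consRel', consRel] at h

/-- Any guarded neighbour of an attacked `S_e`-vertex is a `T_e`-vertex or an endpoint. -/
lemma nbhdS {g : ConsV' G k} (e : ↥G.edgeFinset) (x : Fin (k+1))
    (h : (consGraph' G k).Adj g (some (.inr (e, .inl x)))) :
    (∃ y : Fin k, g = some (.inr (e, .inr y))) ∨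
    (∃ w : Fin n, w ∈ (e.1 : Sym2 (Fin n)) ∧ g = some (.inl (.inr w))) := by
  rw [consAdj] at h
  rcases g with _ | (u' | w) | ⟨e', x' | y'⟩
  · simp [consRel', consGuard] at h
  · simp [consRel', consRel] at h
  · refine Or.inr ⟨w, ?_, rfl⟩
    simpa [consRel', consRel] using h
  · simp [consRel', consRel] at h
  · obtain ⟨-, h | h⟩ := h
    · simp [consRel', consRel] at h
    · left
      have : e = e' := by simpa [consRel', consRel] using h
      exact ⟨y', by rw [this]⟩

end Proofs
section Attacker

variable {n : ℕ} {G : SimpleGraph (Fin n)} [DecidableRel G.Adj] {k : ℕ}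

lemma memD' (x : ConsV G k) : some x ∈ consD' G k ↔ consGuard G k x = true := by
  simp [consD']

lemma noneMemD' : (none : ConsV' G k) ∈ consD' G k := by simp [consD']

lemma attacker2 (e : ↥G.edgeFinset) (i j : Fin n)
    (hes : (e.1 : Sym2 (Fin n)) = s(i, j)) :
    ∀ m, m ≤ k → ∀ D : Finset (ConsV' G k),
      some (Sum.inl (Sum.inr i)) ∉ D → some (Sum.inl (Sum.inr j)) ∉ D →
      (∃ TB : Finset (Fin k), TB.card ≤ m ∧
        ∀ y, some (Sum.inr (e, Sum.inr y)) ∈ D → y ∈ TB) →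
      (∃ SB : Finset (Fin (k+1)), SB.card + m ≤ k ∧
        ∀ x, some (Sum.inr (e, Sum.inl x)) ∈ D → x ∈ SB) →
      AttackerWinsIn (consGraph' G k) (m + 1) D := by
  intro m
  induction m with
  | zero =>
    intro _ D hi hj ⟨TB, hTc, hTB⟩ ⟨SB, hSc, hSB⟩
    obtain ⟨x, hx⟩ : ∃ x : Fin (k+1), x ∉ SB := by
      by_contra h; push_neg at h
      have := Finset.card_le_card (fun x _ => h x : Finset.univ ⊆ SB)
      simp at this; omega
    rw [AttackerWinsIn]
    refine ⟨some (Sum.inr (e, Sum.inl x)), fun hc => hx (hSB x hc),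
      fun g hg hadj => ?_⟩
    exfalso
    rcases nbhdS e x hadj with ⟨y, rfl⟩ | ⟨w, hw, rfl⟩
    · have := Finset.card_pos.mpr ⟨y, hTB y hg⟩; omega
    · rw [hes, Sym2.mem_iff] at hw
      rcases hw with rfl | rfl
      · exact hi hg
      · exact hj hg
  | succ m ih =>
    intro hm D hi hj ⟨TB, hTc, hTB⟩ ⟨SB, hSc, hSB⟩
    obtain ⟨x, hx⟩ : ∃ x : Fin (k+1), x ∉ SB := by
      by_contra h; push_neg at h
      have := Finset.card_le_card (fun x _ => h x : Finset.univ ⊆ SB)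
      simp at this; omega
    rw [AttackerWinsIn]
    refine ⟨some (Sum.inr (e, Sum.inl x)), fun hc => hx (hSB x hc),
      fun g hg hadj => ?_⟩
    rcases nbhdS e x hadj with ⟨y, rfl⟩ | ⟨w, hw, rfl⟩
    · -- response from T_e
      apply ih (by omega)
      · simp only [Finset.mem_insert, Finset.mem_erase]
        rintro (h | ⟨-, h⟩)
        · simp at h
        · exact hi h
      · simp only [Finset.mem_insert, Finset.mem_erase]
        rintro (h | ⟨-, h⟩)
        · simp at h
        · exact hj h
      · refine ⟨TB.erase y, ?_, fun z hz => ?_⟩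
        · have := Finset.card_erase_of_mem (hTB y hg); omega
        · simp only [Finset.mem_insert, Finset.mem_erase] at hz
          rcases hz with h | ⟨h1, h2⟩
          · simp at h
          · exact Finset.mem_erase.mpr ⟨by simpa using h1, hTB z h2⟩
      · refine ⟨insert x SB, ?_, fun z hz => ?_⟩
        · have := Finset.card_insert_le x SB; omega
        · simp only [Finset.mem_insert, Finset.mem_erase] at hz
          rcases hz with h | ⟨h1, h2⟩
          · simp only [Option.some.injEq, Sum.inr.injEq, Prod.mk.injEq,
              Sum.inl.injEq] at h
            exact Finset.mem_insert.mpr (Or.inl h.2)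
          · exact Finset.mem_insert.mpr (Or.inr (hSB z h2))
    · rw [hes, Sym2.mem_iff] at hw
      exfalso
      rcases hw with rfl | rfl
      · exact hi hg
      · exact hj hg

end Attacker
section Attacker1

variable {n : ℕ} {G : SimpleGraph (Fin n)} [DecidableRel G.Adj] {k : ℕ}

lemma attacker1
    (hni : ¬ ∃ I : Finset (Fin n), I.card = k ∧
      ∀ a ∈ I, ∀ b ∈ I, a ≠ b → ¬ G.Adj a b) :
    ∀ j m, m + j = k → ∀ (D : Finset (ConsV' G k)) (W : Finset (Fin n)),
      W.card = m →
      (∀ v : Fin n, some (Sum.inl (Sum.inr v)) ∈ D ↔ v ∉ W) →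
      (∀ (e : ↥G.edgeFinset) (y : Fin k), some (Sum.inr (e, Sum.inr y)) ∈ D) →
      (∀ (e : ↥G.edgeFinset) (x : Fin (k+1)), some (Sum.inr (e, Sum.inl x)) ∉ D) →
      (∀ u : Fin k, some (Sum.inl (Sum.inl u)) ∈ D → (u : ℕ) < m) →
      AttackerWinsIn (consGraph' G k) (j + (k + 1)) D := by
  intro j
  induction j with
  | zero =>
    intro m hm D W hW hV hT hS hU
    have hW' : W.card = k := by omega
    -- W has cardinality k, hence is not independent: it contains an edge
    have : ¬ (∀ a ∈ W, ∀ b ∈ W, a ≠ b → ¬ G.Adj a b) := fun h => hni ⟨W, hW', h⟩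
    push_neg at this
    obtain ⟨a, ha, b, hb, hab, hadj⟩ := this
    have he : s(a, b) ∈ G.edgeFinset := by
      rw [SimpleGraph.mem_edgeFinset, SimpleGraph.mem_edgeSet]; exact hadj
    have h0 : (0 : ℕ) + (k + 1) = k + 1 := by omega
    rw [h0]
    refine attacker2 ⟨s(a,b), he⟩ a b rfl k le_rfl D
      (fun h => (hV a).mp h ha) (fun h => (hV b).mp h hb)
      ⟨Finset.univ, by simp, fun y _ => Finset.mem_univ y⟩
      ⟨∅, by simp, fun x hx => absurd hx (hS _ x)⟩
  | succ j ih =>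
    intro m hm D W hW hV hT hS hU
    have hmk : m < k := by omega
    have harith : (j + 1) + (k + 1) = (j + (k + 1)) + 1 := by omega
    rw [harith, AttackerWinsIn]
    refine ⟨some (Sum.inl (Sum.inl ⟨m, hmk⟩)), fun hc => by simpa using hU _ hc,
      fun g hg hadj => ?_⟩
    obtain ⟨w, rfl⟩ := nbhdU _ hadj
    have hwW : w ∉ W := (hV w).mp hg
    refine ih (m + 1) (by omega) _ (insert w W) (by simp [Finset.card_insert_of_notMem hwW, hW]) ?_ ?_ ?_ ?_
    · intro v
      simp only [Finset.mem_insert, Finset.mem_erase, Option.some.injEq,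
        Sum.inl.injEq, Sum.inr.injEq, Finset.mem_insert]
      constructor
      · rintro (h | ⟨h1, h2⟩)
        · simp at h
        · rintro (rfl | hvW)
          · exact h1 rfl
          · exact (hV v).mp h2 hvW
      · intro h
        push_neg at h
        exact Or.inr ⟨fun hc => h.1 (by simpa using hc), (hV v).mpr h.2⟩
    · intro e y
      simp only [Finset.mem_insert, Finset.mem_erase]
      exact Or.inr ⟨by simp, hT e y⟩
    · intro e x
      simp only [Finset.mem_insert, Finset.mem_erase]
      rintro (h | ⟨-, h⟩)
      · simp at h
      · exact hS e x h
    · intro u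
      simp only [Finset.mem_insert, Finset.mem_erase]
      rintro (h | ⟨-, h⟩)
      · simp only [Option.some.injEq, Sum.inl.injEq] at h
        subst h; simp
      · have := hU u h; omega

lemma attacker_main
    (hni : ¬ ∃ I : Finset (Fin n), I.card = k ∧
      ∀ a ∈ I, ∀ b ∈ I, a ≠ b → ¬ G.Adj a b) :
    AttackerWinsIn (consGraph' G k) (2 * k + 1) (consD' G k) := by
  have h : (2 * k + 1) = k + (k + 1) := by omega
  rw [h]
  refine attacker1 hni k 0 (by omega) _ ∅ rfl ?_ ?_ ?_ ?_
  · intro v; simp [memD', consGuard]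
  · intro e y; simp [memD', consGuard]
  · intro e x; simp [memD', consGuard]
  · intro u h
    rw [memD'] at h
    simp [consGuard] at h

end Attacker1
section Defender

variable {n : ℕ} {G : SimpleGraph (Fin n)} [DecidableRel G.Adj] {k : ℕ}

/-- Defender's invariant: reachable guard configurations under the defender's
strategy built from an independent set `I` of size `k`, after `a` attacks. -/
def GInv (G : SimpleGraph (Fin n)) [DecidableRel G.Adj] (k : ℕ) (I : Finset (Fin n))
    (a : ℕ) (D : Finset (ConsV' G k)) : Prop :=
  ∃ (A : Finset (Fin k)) (W : Finset (Fin n)) (ch : Fin n → Option ↥G.edgeFinset)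
    (Δ : ↥G.edgeFinset → Finset (Fin k)) (Γ : ↥G.edgeFinset → Finset (Fin (k+1)))
    (c : ↥G.edgeFinset → ℕ) (d : ℕ),
    (none ∈ D) ∧
    (∀ u, some (Sum.inl (Sum.inl u)) ∈ D ↔ u ∈ A) ∧
    (∀ v, some (Sum.inl (Sum.inr v)) ∈ D ↔ v ∉ W) ∧
    (∀ e x, some (Sum.inr (e, Sum.inl x)) ∈ D ↔ x ∈ Γ e) ∧
    (∀ e y, some (Sum.inr (e, Sum.inr y)) ∈ D ↔ y ∉ Δ e) ∧
    ((W.filter fun w => ch w = none).card = A.card) ∧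
    (∀ w ∈ W, ch w = none → w ∈ I) ∧
    (∀ w ∈ W, ∀ e, ch w = some e → w ∈ (e.1 : Sym2 (Fin n)) ∧ w ∉ I) ∧
    (∀ e, (Γ e).card = (Δ e).card + (W.filter fun w => ch w = some e).card) ∧
    (∀ e, (Δ e).card ≤ c e) ∧
    (∀ e, (∃ w ∈ W, ch w = some e) → k + 1 ≤ c e) ∧
    (∑ e, c e + d ≤ a) ∧ (A.card ≤ d)

lemma inv_init (I : Finset (Fin n)) : GInv G k I 0 (consD' G k) := by
  refine ⟨∅, ∅, fun _ => none, fun _ => ∅, fun _ => ∅, fun _ => 0, 0,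
    noneMemD', ?_, ?_, ?_, ?_, by simp, by simp, by simp, by simp, by simp,
    by simp, by simp, by simp⟩
  · intro u; simp [memD', consGuard]
  · intro v; simp [memD', consGuard]
  · intro e x; simp [memD', consGuard]
  · intro e y; simp [memD', consGuard]

end Defender
section DefStep

variable {n : ℕ} {G : SimpleGraph (Fin n)} [DecidableRel G.Adj] {k : ℕ}

lemma defender_step (I : Finset (Fin n)) (hIc : I.card = k)
    (hInd : ∀ a ∈ I, ∀ b ∈ I, a ≠ b → ¬ G.Adj a b)
    (a : ℕ) (ha : a ≤ 2 * k) (D : Finset (ConsV' G k)) (hinv : GInv G k I a D) :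
    ∀ v ∉ D, ∃ g ∈ D, (consGraph' G k).Adj g v ∧
      GInv G k I (a + 1) (insert v (D.erase g)) := by
  obtain ⟨A, W, ch, Δ, Γ, c, d, hnone, hU, hV, hS, hT, hC2, hC2', hC3, hC4,
    hN1, hN2, hN3, hN4⟩ := hinv
  intro v hv
  rcases v with _ | (u | w) | ⟨e, x | y⟩
  · exact absurd hnone hv
  · -- Case 1 : attack on a U-vertex
    have huA : u ∉ A := fun h => hv ((hU u).mpr h)
    have hAk : A.card < k := by
      have := Finset.card_lt_card (⟨Finset.subset_univ A,
        fun hsub => huA (hsub (Finset.mem_univ u))⟩ : A ⊂ Finset.univ)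
      simpa using this
    obtain ⟨w, hwI, hwW⟩ : ∃ w ∈ I, w ∉ W := by
      by_contra hcon; push_neg at hcon
      have hIf : I ⊆ W.filter fun x => ch x = none := by
        intro x hx
        refine Finset.mem_filter.mpr ⟨hcon x hx, ?_⟩
        cases hc : ch x with
        | none => rfl
        | some e => exact absurd hx (hC3 x (hcon x hx) e hc).2
      have := Finset.card_le_card hIf
      omega
    refine ⟨some (Sum.inl (Sum.inr w)), (hV w).mpr hwW, adjVU u w,
      insert u A, insert w W, Function.update ch w none,
      Δ, Γ, c, d + 1, ?_, ?_, ?_, ?_, ?_, ?_, ?_, ?_, ?_, ?_, ?_, ?_, ?_⟩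
    · exact Finset.mem_insert.mpr (Or.inr (Finset.mem_erase.mpr ⟨by simp, hnone⟩))
    · intro u'
      simp only [Finset.mem_insert, Finset.mem_erase, hU, Option.some.injEq,
        Sum.inl.injEq, Sum.inr.injEq, reduceCtorEq, ne_eq, not_false_eq_true,
        true_and]
      (try tauto)
    · intro v'
      simp only [Finset.mem_insert, Finset.mem_erase, hV, Option.some.injEq,
        Sum.inl.injEq, Sum.inr.injEq, reduceCtorEq, ne_eq, false_or]
      constructor
      · rintro ⟨h1, h2⟩ (rfl | hvW)
        · exact h1 rfl
        · exact h2 hvW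
      · intro h
        push_neg at h
        try tauto
    · intro e' x'
      simp only [Finset.mem_insert, Finset.mem_erase, hS, Option.some.injEq,
        reduceCtorEq, ne_eq, not_false_eq_true, true_and, false_or]
    · intro e' y'
      simp only [Finset.mem_insert, Finset.mem_erase, hT, Option.some.injEq,
        reduceCtorEq, ne_eq, not_false_eq_true, true_and, false_or]
    · -- C2
      rw [Finset.filter_insert, if_pos (by simp)]
      rw [Finset.card_insert_of_notMem (fun hc => hwW (Finset.mem_of_mem_filter _ hc)),
        Finset.card_insert_of_notMem huA]
      congr 1
      rw [← hC2]
      congr 1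
      apply Finset.filter_congr
      intro x hx
      have hxw : x ≠ w := fun hxw => hwW (hxw ▸ hx)
      simp [Function.update_of_ne hxw]
    · -- C2'
      intro p hp hcp
      rcases Finset.mem_insert.mp hp with rfl | hpW
      · exact hwI
      · have hne : p ≠ w := fun hc => hwW (hc ▸ hpW)
        rw [Function.update_of_ne hne] at hcp
        exact hC2' p hpW hcp
    · -- C3
      intro p hp e' hcp
      rcases Finset.mem_insert.mp hp with rfl | hpW
      · rw [Function.update_self] at hcp; exact absurd hcp (by simp)
      · have hne : p ≠ w := fun hc => hwW (hc ▸ hpW)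
        rw [Function.update_of_ne hne] at hcp
        exact hC3 p hpW e' hcp
    · -- C4
      intro e'
      rw [hC4 e']
      congr 1
      congr 1
      rw [Finset.filter_insert, if_neg (by simp)]
      apply Finset.filter_congr
      intro x hx
      have hxw : x ≠ w := fun hxw => hwW (hxw ▸ hx)
      simp [Function.update_of_ne hxw]
    · exact hN1
    · -- N2
      intro e' ⟨p, hp, hcp⟩
      rcases Finset.mem_insert.mp hp with rfl | hpW
      · rw [Function.update_self] at hcp; exact absurd hcp (by simp)
      · have hne : p ≠ w := fun hc => hwW (hc ▸ hpW)
        rw [Function.update_of_ne hne] at hcp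
        exact hN2 e' ⟨p, hpW, hcp⟩
    · omega
    · rw [Finset.card_insert_of_notMem huA]; omega
  · -- Case 2 : attack on a V-vertex
    have hwW : w ∈ W := by
      by_contra hc; exact hv ((hV w).mpr hc)
    cases hcw : ch w with
    | none =>
      -- respond from a guarded U-vertex
      have hwf : w ∈ W.filter fun p => ch p = none :=
        Finset.mem_filter.mpr ⟨hwW, hcw⟩
      have hA1 : 1 ≤ A.card := by
        have := Finset.card_pos.mpr ⟨w, hwf⟩; omega
      obtain ⟨u, huA⟩ := Finset.card_pos.mp (show 0 < A.card by omega)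
      refine ⟨some (Sum.inl (Sum.inl u)), (hU u).mpr huA, adjUV u w,
        A.erase u, W.erase w, ch, Δ, Γ, c, d,
        ?_, ?_, ?_, ?_, ?_, ?_, ?_, ?_, ?_, hN1, ?_, by omega, ?_⟩
      · exact Finset.mem_insert.mpr (Or.inr (Finset.mem_erase.mpr ⟨by simp, hnone⟩))
      · intro u'
        simp only [Finset.mem_insert, Finset.mem_erase, hU, Option.some.injEq,
          Sum.inl.injEq, Sum.inr.injEq, reduceCtorEq, ne_eq, false_or]
        try tauto
      · intro v'
        simp only [Finset.mem_insert, Finset.mem_erase, hV, Option.some.injEq,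
          Sum.inl.injEq, Sum.inr.injEq, reduceCtorEq, ne_eq, not_false_eq_true,
          true_and]
        try tauto
      · intro e' x'
        simp only [Finset.mem_insert, Finset.mem_erase, hS, Option.some.injEq,
          reduceCtorEq, ne_eq, not_false_eq_true, true_and, false_or]
      · intro e' y'
        simp only [Finset.mem_insert, Finset.mem_erase, hT, Option.some.injEq,
          reduceCtorEq, ne_eq, not_false_eq_true, true_and, false_or]
      · -- C2
        rw [Finset.filter_erase, Finset.card_erase_of_mem hwf,
          Finset.card_erase_of_mem huA, hC2]
      · exact fun p hp hcp => hC2' p (Finset.mem_of_mem_erase hp) hcp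
      · exact fun p hp e' hcp => hC3 p (Finset.mem_of_mem_erase hp) e' hcp
      · -- C4
        intro e'
        rw [Finset.filter_erase, Finset.erase_eq_of_notMem, hC4 e']
        intro hc
        have := (Finset.mem_filter.mp hc).2
        rw [hcw] at this
        exact absurd this (by simp)
      · exact fun e' ⟨p, hp, hcp⟩ => hN2 e' ⟨p, Finset.mem_of_mem_erase hp, hcp⟩
      · have := Finset.card_erase_le (a := u) (s := A); omega
    | some e =>
      -- respond from a guarded S_e-vertex
      have hwf : w ∈ W.filter fun p => ch p = some e :=
        Finset.mem_filter.mpr ⟨hwW, hcw⟩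
      have hwe := (hC3 w hwW e hcw).1
      have hG1 : 1 ≤ (Γ e).card := by
        have h1 := Finset.card_pos.mpr ⟨w, hwf⟩
        have := hC4 e; omega
      obtain ⟨x, hxG⟩ := Finset.card_pos.mp (show 0 < (Γ e).card by omega)
      refine ⟨some (Sum.inr (e, Sum.inl x)), (hS e x).mpr hxG, adjSV e x w hwe,
        A, W.erase w, ch, Δ, Function.update Γ e ((Γ e).erase x), c, d,
        ?_, ?_, ?_, ?_, ?_, ?_, ?_, ?_, ?_, hN1, ?_, by omega, hN4⟩
      · exact Finset.mem_insert.mpr (Or.inr (Finset.mem_erase.mpr ⟨by simp, hnone⟩))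
      · intro u'
        simp only [Finset.mem_insert, Finset.mem_erase, hU, Option.some.injEq,
          Sum.inl.injEq, Sum.inr.injEq, Prod.mk.injEq, reduceCtorEq, ne_eq,
          not_false_eq_true, true_and, false_or, and_false, false_and]
        try tauto
      · intro v'
        simp only [Finset.mem_insert, Finset.mem_erase, hV, Option.some.injEq,
          Sum.inl.injEq, Sum.inr.injEq, reduceCtorEq, ne_eq, not_false_eq_true,
          true_and]
        try tauto
      · intro e' x'
        by_cases hee : e' = e
        · subst hee
          simp only [Finset.mem_insert, Finset.mem_erase, hS, Option.some.injEq,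
            Sum.inr.injEq, Prod.mk.injEq, Sum.inl.injEq, reduceCtorEq, ne_eq,
            Function.update_self, Finset.mem_erase]
          try tauto
        · simp only [Finset.mem_insert, Finset.mem_erase, hS, Option.some.injEq,
            Sum.inr.injEq, Prod.mk.injEq, Sum.inl.injEq, reduceCtorEq, ne_eq,
            Function.update_of_ne hee]
          try tauto
      · intro e' y'
        simp only [Finset.mem_insert, Finset.mem_erase, hT, Option.some.injEq,
          Sum.inr.injEq, Prod.mk.injEq, reduceCtorEq, ne_eq, not_false_eq_true,
          and_false, true_and, false_or]
      · -- C2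
        rw [Finset.filter_erase, Finset.erase_eq_of_notMem, hC2]
        intro hc
        have := (Finset.mem_filter.mp hc).2
        rw [hcw] at this
        exact absurd this (by simp)
      · exact fun p hp hcp => hC2' p (Finset.mem_of_mem_erase hp) hcp
      · exact fun p hp e' hcp => hC3 p (Finset.mem_of_mem_erase hp) e' hcp
      · -- C4
        intro e'
        by_cases hee : e' = e
        · subst hee
          rw [Function.update_self, Finset.filter_erase,
            Finset.card_erase_of_mem hxG, Finset.card_erase_of_mem hwf]
          have h1 := Finset.card_pos.mpr ⟨w, hwf⟩
          have := hC4 e'; omega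
        · rw [Function.update_of_ne hee, Finset.filter_erase,
            Finset.erase_eq_of_notMem, hC4 e']
          intro hc
          have h2 := (Finset.mem_filter.mp hc).2
          rw [hcw] at h2
          simp only [Option.some.injEq] at h2
          exact hee h2.symm
      · exact fun e' ⟨p, hp, hcp⟩ => hN2 e' ⟨p, Finset.mem_of_mem_erase hp, hcp⟩
  · -- Case 3 : attack on an S_e-vertex
    have hxG : x ∉ Γ e := fun h => hv ((hS e x).mpr h)
    by_cases hfull : ∀ y : Fin k, y ∈ Δ e
    · -- T_e is completely drained : respond from an endpoint of e
      have hΔu : Δ e = Finset.univ := Finset.eq_univ_iff_forall.mpr hfull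
      have hΔk : (Δ e).card = k := by rw [hΔu]; simp
      have hGk : (Γ e).card ≤ k := by
        have hsub : Γ e ⊆ Finset.univ.erase x := fun z hz =>
          Finset.mem_erase.mpr ⟨fun hzx => hxG (hzx ▸ hz), Finset.mem_univ z⟩
        have := Finset.card_le_card hsub
        simpa using this
      have hcnt0 : (W.filter fun p => ch p = some e).card = 0 := by
        have := hC4 e; omega
      have hGke : (Γ e).card = k := by have := hC4 e; omega
      obtain ⟨i, j, hije⟩ : ∃ i j, (e.1 : Sym2 (Fin n)) = s(i, j) :=
        Sym2.ind (fun i j => ⟨i, j, rfl⟩) e.1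
      have hadj_ij : G.Adj i j := by
        have := e.2
        rw [SimpleGraph.mem_edgeFinset, hije, SimpleGraph.mem_edgeSet] at this
        exact this
      have hijne : i ≠ j := hadj_ij.ne
      -- a vertex of e which is not in I and not in W is available
      have key : ∀ p, p ∈ (e.1 : Sym2 (Fin n)) → p ∉ I → p ∉ W := by
        intro p hpe hpI hpW
        cases hcp : ch p with
        | none => exact hpI (hC2' p hpW hcp)
        | some e' =>
          have hee : e ≠ e' := by
            rintro rfl
            have : p ∈ W.filter fun q => ch q = some e :=
              Finset.mem_filter.mpr ⟨hpW, hcp⟩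
            have := Finset.card_pos.mpr ⟨p, this⟩
            omega
          have h1 : k + 1 ≤ c e' := hN2 e' ⟨p, hpW, hcp⟩
          have h2 : k ≤ c e := by have := hN1 e; omega
          have h3 : c e + c e' ≤ ∑ f, c f := by
            have hsub : ({e, e'} : Finset ↥G.edgeFinset) ⊆ Finset.univ :=
              Finset.subset_univ _
            have := Finset.sum_le_sum_of_subset (f := c) hsub
            rwa [Finset.sum_pair hee] at this
          omega
      obtain ⟨p, hpe, hpI, hpW⟩ : ∃ p, p ∈ (e.1 : Sym2 (Fin n)) ∧ p ∉ I ∧ p ∉ W := by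
        by_cases hiI : i ∈ I
        · have hjI : j ∉ I := fun hjI => hInd i hiI j hjI hijne hadj_ij
          have hje : j ∈ (e.1 : Sym2 (Fin n)) := by rw [hije, Sym2.mem_iff]; tauto
          exact ⟨j, hje, hjI, key j hje hjI⟩
        · have hie : i ∈ (e.1 : Sym2 (Fin n)) := by rw [hije, Sym2.mem_iff]; tauto
          exact ⟨i, hie, hiI, key i hie hiI⟩
      refine ⟨some (Sum.inl (Sum.inr p)), (hV p).mpr hpW, adjVS e x p hpe,
        A, insert p W, Function.update ch p (some e), Δ,
        Function.update Γ e (insert x (Γ e)), Function.update c e (c e + 1), d,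
        ?_, ?_, ?_, ?_, ?_, ?_, ?_, ?_, ?_, ?_, ?_, ?_, hN4⟩
      · exact Finset.mem_insert.mpr (Or.inr (Finset.mem_erase.mpr ⟨by simp, hnone⟩))
      · intro u'
        simp only [Finset.mem_insert, Finset.mem_erase, hU, Option.some.injEq,
          Sum.inl.injEq, Sum.inr.injEq, Prod.mk.injEq, reduceCtorEq, ne_eq,
          not_false_eq_true, true_and, false_or, and_false, false_and]
        try tauto
      · intro v'
        simp only [Finset.mem_insert, Finset.mem_erase, hV, Option.some.injEq,
          Sum.inl.injEq, Sum.inr.injEq, reduceCtorEq, ne_eq, false_or]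
        try tauto
      · intro e' x'
        by_cases hee : e' = e
        · subst hee
          simp only [Finset.mem_insert, Finset.mem_erase, hS, Option.some.injEq,
            Sum.inr.injEq, Prod.mk.injEq, Sum.inl.injEq, reduceCtorEq, ne_eq,
            Function.update_self, Finset.mem_insert]
          try tauto
        · simp only [Finset.mem_insert, Finset.mem_erase, hS, Option.some.injEq,
            Sum.inr.injEq, Prod.mk.injEq, Sum.inl.injEq, reduceCtorEq, ne_eq,
            Function.update_of_ne hee]
          try tauto
      · intro e' y'
        simp only [Finset.mem_insert, Finset.mem_erase, hT, Option.some.injEq,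
          Sum.inr.injEq, Prod.mk.injEq, reduceCtorEq, ne_eq, not_false_eq_true,
          and_false, true_and, false_or]
      · -- C2
        rw [Finset.filter_insert, if_neg (by simp)]
        rw [← hC2]
        congr 1
        apply Finset.filter_congr
        intro q hq
        have hqp : q ≠ p := fun hc => hpW (hc ▸ hq)
        simp [Function.update_of_ne hqp]
      · -- C2'
        intro q hq hcq
        rcases Finset.mem_insert.mp hq with rfl | hqW
        · rw [Function.update_self] at hcq; exact absurd hcq (by simp)
        · have hqp : q ≠ p := fun hc => hpW (hc ▸ hqW)
          rw [Function.update_of_ne hqp] at hcq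
          exact hC2' q hqW hcq
      · -- C3
        intro q hq e' hcq
        rcases Finset.mem_insert.mp hq with rfl | hqW
        · rw [Function.update_self] at hcq
          simp only [Option.some.injEq] at hcq
          subst hcq
          exact ⟨hpe, hpI⟩
        · have hqp : q ≠ p := fun hc => hpW (hc ▸ hqW)
          rw [Function.update_of_ne hqp] at hcq
          exact hC3 q hqW e' hcq
      · -- C4
        intro e'
        by_cases hee : e' = e
        · subst hee
          rw [Function.update_self, Finset.card_insert_of_notMem hxG,
            Finset.filter_insert, if_pos (by rw [Function.update_self])]
          have hfW : (W.filter fun q => Function.update ch p (some e') q = some e')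
              = W.filter fun q => ch q = some e' := by
            apply Finset.filter_congr
            intro q hq
            have hqp : q ≠ p := fun hc => hpW (hc ▸ hq)
            simp [Function.update_of_ne hqp]
          rw [Finset.card_insert_of_notMem (fun hc => hpW (Finset.mem_of_mem_filter _ hc)),
            hfW]
          omega
        · rw [Function.update_of_ne hee, Finset.filter_insert,
            if_neg (by rw [Function.update_self]; simp [Ne.symm hee]), hC4 e']
          congr 2
          apply Finset.filter_congr
          intro q hq
          have hqp : q ≠ p := fun hc => hpW (hc ▸ hq)
          simp [Function.update_of_ne hqp]
      · -- N1
        intro e'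
        by_cases hee : e' = e
        · subst hee; rw [Function.update_self]; have := hN1 e'; omega
        · rw [Function.update_of_ne hee]; exact hN1 e'
      · -- N2
        intro e' ⟨q, hq, hcq⟩
        by_cases hee : e' = e
        · subst hee
          rw [Function.update_self]
          have := hN1 e'
          omega
        · rw [Function.update_of_ne hee]
          rcases Finset.mem_insert.mp hq with rfl | hqW
          · rw [Function.update_self] at hcq
            simp only [Option.some.injEq] at hcq
            exact absurd hcq.symm hee
          · have hqp : q ≠ p := fun hc => hpW (hc ▸ hqW)
            rw [Function.update_of_ne hqp] at hcq
            exact hN2 e' ⟨q, hqW, hcq⟩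
      · -- N3
        have hsum : ∑ f, Function.update c e (c e + 1) f = (∑ f, c f) + 1 := by
          rw [Finset.sum_update_of_mem (Finset.mem_univ e),
            Finset.sdiff_singleton_eq_erase,
            ← Finset.add_sum_erase Finset.univ c (Finset.mem_univ e)]
          omega
        omega
    · -- respond from a guarded T_e-vertex
      push_neg at hfull
      obtain ⟨y, hyΔ⟩ := hfull
      refine ⟨some (Sum.inr (e, Sum.inr y)), (hT e y).mpr hyΔ, adjTS e x y,
        A, W, ch, Function.update Δ e (insert y (Δ e)),
        Function.update Γ e (insert x (Γ e)), Function.update c e (c e + 1), d,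
        ?_, ?_, ?_, ?_, ?_, hC2, hC2', hC3, ?_, ?_, ?_, ?_, hN4⟩
      · exact Finset.mem_insert.mpr (Or.inr (Finset.mem_erase.mpr ⟨by simp, hnone⟩))
      · intro u'
        simp only [Finset.mem_insert, Finset.mem_erase, hU, Option.some.injEq,
          Sum.inl.injEq, Sum.inr.injEq, Prod.mk.injEq, reduceCtorEq, ne_eq,
          not_false_eq_true, true_and, false_or, and_false, false_and]
        try tauto
      · intro v'
        simp only [Finset.mem_insert, Finset.mem_erase, hV, Option.some.injEq,
          Sum.inl.injEq, Sum.inr.injEq, Prod.mk.injEq, reduceCtorEq, ne_eq,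
          not_false_eq_true, true_and, false_or, and_false, false_and]
        try tauto
      · intro e' x'
        by_cases hee : e' = e
        · subst hee
          simp only [Finset.mem_insert, Finset.mem_erase, hS, Option.some.injEq,
            Sum.inr.injEq, Prod.mk.injEq, Sum.inl.injEq, reduceCtorEq, ne_eq,
            and_false, not_false_eq_true, true_and, Function.update_self,
            Finset.mem_insert]
          try tauto
        · simp only [Finset.mem_insert, Finset.mem_erase, hS, Option.some.injEq,
            Sum.inr.injEq, Prod.mk.injEq, Sum.inl.injEq, reduceCtorEq, ne_eq,
            and_false, not_false_eq_true, true_and, Function.update_of_ne hee]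
          try tauto
      · intro e' y'
        by_cases hee : e' = e
        · subst hee
          simp only [Finset.mem_insert, Finset.mem_erase, hT, Option.some.injEq,
            Sum.inr.injEq, Prod.mk.injEq, reduceCtorEq, ne_eq,
            Function.update_self, Finset.mem_insert]
          try tauto
        · simp only [Finset.mem_insert, Finset.mem_erase, hT, Option.some.injEq,
            Sum.inr.injEq, Prod.mk.injEq, reduceCtorEq, ne_eq,
            Function.update_of_ne hee]
          try tauto
      · -- C4
        intro e'
        by_cases hee : e' = e
        · subst hee
          rw [Function.update_self, Function.update_self,
            Finset.card_insert_of_notMem hxG, Finset.card_insert_of_notMem hyΔ]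
          have := hC4 e'; omega
        · rw [Function.update_of_ne hee, Function.update_of_ne hee]
          exact hC4 e'
      · -- N1
        intro e'
        by_cases hee : e' = e
        · subst hee
          rw [Function.update_self, Function.update_self,
            Finset.card_insert_of_notMem hyΔ]
          have := hN1 e'; omega
        · rw [Function.update_of_ne hee, Function.update_of_ne hee]
          exact hN1 e'
      · -- N2
        intro e' hw
        by_cases hee : e' = e
        · subst hee
          rw [Function.update_self]
          have := hN2 e' hw; omega
        · rw [Function.update_of_ne hee]
          exact hN2 e' hw
      · -- N3
        have hsum : ∑ f, Function.update c e (c e + 1) f = (∑ f, c f) + 1 := by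
          rw [Finset.sum_update_of_mem (Finset.mem_univ e),
            Finset.sdiff_singleton_eq_erase,
            ← Finset.add_sum_erase Finset.univ c (Finset.mem_univ e)]
          omega
        omega
  · -- Case 4 : attack on a T_e-vertex
    have hyΔ : y ∈ Δ e := by
      by_contra hc; exact hv ((hT e y).mpr hc)
    have hG1 : 1 ≤ (Γ e).card := by
      have h1 := Finset.card_pos.mpr ⟨y, hyΔ⟩
      have := hC4 e; omega
    obtain ⟨x, hxG⟩ := Finset.card_pos.mp (show 0 < (Γ e).card by omega)
    refine ⟨some (Sum.inr (e, Sum.inl x)), (hS e x).mpr hxG, adjST e x y,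
      A, W, ch, Function.update Δ e ((Δ e).erase y),
      Function.update Γ e ((Γ e).erase x), c, d,
      ?_, ?_, ?_, ?_, ?_, hC2, hC2', hC3, ?_, ?_, hN2, by omega, hN4⟩
    · exact Finset.mem_insert.mpr (Or.inr (Finset.mem_erase.mpr ⟨by simp, hnone⟩))
    · intro u'
      simp only [Finset.mem_insert, Finset.mem_erase, hU, Option.some.injEq,
        Sum.inl.injEq, Sum.inr.injEq, Prod.mk.injEq, reduceCtorEq, ne_eq,
        not_false_eq_true, true_and, false_or, and_false, false_and]
      try tauto
    · intro v'
      simp only [Finset.mem_insert, Finset.mem_erase, hV, Option.some.injEq,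
        Sum.inl.injEq, Sum.inr.injEq, Prod.mk.injEq, reduceCtorEq, ne_eq,
        not_false_eq_true, true_and, false_or, and_false, false_and]
      try tauto
    · intro e' x'
      by_cases hee : e' = e
      · subst hee
        simp only [Finset.mem_insert, Finset.mem_erase, hS, Option.some.injEq,
          Sum.inr.injEq, Prod.mk.injEq, Sum.inl.injEq, reduceCtorEq, ne_eq,
          and_false, not_false_eq_true, true_and, Function.update_self,
          Finset.mem_erase]
        try tauto
      · simp only [Finset.mem_insert, Finset.mem_erase, hS, Option.some.injEq,
          Sum.inr.injEq, Prod.mk.injEq, Sum.inl.injEq, reduceCtorEq, ne_eq,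
          and_false, not_false_eq_true, true_and, Function.update_of_ne hee]
        try tauto
    · intro e' y'
      by_cases hee : e' = e
      · subst hee
        simp only [Finset.mem_insert, Finset.mem_erase, hT, Option.some.injEq,
          Sum.inr.injEq, Prod.mk.injEq, reduceCtorEq, ne_eq,
          Function.update_self, Finset.mem_erase]
        try tauto
      · simp only [Finset.mem_insert, Finset.mem_erase, hT, Option.some.injEq,
          Sum.inr.injEq, Prod.mk.injEq, reduceCtorEq, ne_eq,
          Function.update_of_ne hee]
        try tauto
    · -- C4
      intro e'
      by_cases hee : e' = e
      · subst hee
        rw [Function.update_self, Function.update_self,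
          Finset.card_erase_of_mem hxG, Finset.card_erase_of_mem hyΔ]
        have h1 := Finset.card_pos.mpr ⟨y, hyΔ⟩
        have := hC4 e'; omega
      · rw [Function.update_of_ne hee, Function.update_of_ne hee]
        exact hC4 e'
    · -- N1
      intro e'
      by_cases hee : e' = e
      · subst hee
        rw [Function.update_self]
        have h1 := Finset.card_erase_le (a := y) (s := Δ e')
        have := hN1 e'; omega
      · rw [Function.update_of_ne hee]
        exact hN1 e'

end DefStep
section Final

variable {n : ℕ} {G : SimpleGraph (Fin n)} [DecidableRel G.Adj] {k : ℕ}

lemma defender_survive (I : Finset (Fin n)) (hIc : I.card = k)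
    (hInd : ∀ a ∈ I, ∀ b ∈ I, a ≠ b → ¬ G.Adj a b) :
    ∀ t a (D : Finset (ConsV' G k)), a + t ≤ 2 * k + 1 → GInv G k I a D →
      ¬ AttackerWinsIn (consGraph' G k) t D := by
  intro t
  induction t with
  | zero => intro a D _ _ h; rw [AttackerWinsIn] at h; exact h
  | succ t ih =>
    intro a D hat hinv h
    rw [AttackerWinsIn] at h
    obtain ⟨v, hv, hall⟩ := h
    obtain ⟨g, hg, hadj, hinv'⟩ :=
      defender_step I hIc hInd a (by omega) D hinv v hv
    exact ih (a + 1) _ (by omega) hinv' (hall g hg hadj)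

theorem stmt6' {n : ℕ} (G : SimpleGraph (Fin n)) [DecidableRel G.Adj]
    (k : ℕ) (hk : 1 ≤ k) :
    (¬ ∃ I : Finset (Fin n), I.card = k ∧ ∀ a ∈ I, ∀ b ∈ I, a ≠ b → ¬ G.Adj a b)
      ↔ gameValue (consGraph' G k) (consD' G k) ≤ ((2 * k + 1 : ℕ) : ℕ∞) := by
  constructor
  · intro hni
    exact sInf_le ⟨2 * k + 1, rfl, attacker_main hni⟩
  · intro hgv
    rintro ⟨I, hIc, hInd⟩
    have hsurv : ∀ t, t ≤ 2 * k + 1 →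
        ¬ AttackerWinsIn (consGraph' G k) t (consD' G k) := fun t ht =>
      defender_survive I hIc hInd t 0 _ (by omega) (inv_init I)
    have hlb : ((2 * k + 1 : ℕ) : ℕ∞) + 1 ≤
        gameValue (consGraph' G k) (consD' G k) := by
      apply le_sInf
      rintro b ⟨t, rfl, hwin⟩
      have htgt : 2 * k + 1 < t := by
        by_contra hc
        exact hsurv t (by omega) hwin
      rw [show ((2 * k + 1 : ℕ) : ℕ∞) + 1 = ((2 * k + 2 : ℕ) : ℕ∞) by
        push_cast; ring]
      exact Nat.cast_le.mpr (by omega)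
    have h2 := le_trans hlb hgv
    rw [show ((2 * k + 1 : ℕ) : ℕ∞) + 1 = ((2 * k + 2 : ℕ) : ℕ∞) by
      push_cast; ring] at h2
    have := Nat.cast_le.mp h2
    omega

end Final

/-- `G` has no independent set of size `k` iff `t_{G''}(D') ≤ 2k + 1`. -/
theorem stmt6 {n : ℕ} (G : SimpleGraph (Fin n)) [DecidableRel G.Adj]
    (k : ℕ) (hk : 1 ≤ k) :
    (¬ ∃ I : Finset (Fin n), I.card = k ∧ ∀ a ∈ I, ∀ b ∈ I, a ≠ b → ¬ G.Adj a b)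
      ↔ gameValue (consGraph' G k) (consD' G k) ≤ ((2 * k + 1 : ℕ) : ℕ∞) :=
  stmt6' G k hk
end
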